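/- arXiv:2502.11373 — 3 statements merged into one kernel-verified Lean document; each statement's English description precedes it below -/
import Mathlib

section
/- Let N ≥ 3, 1 ≤ k < N, and L > 0. If u : ℝ^N → ℝ is bounded and harmonic (Δu = 0), is L-periodic in each of its first k variables, and satisfies u(y',y'') → 0 as |y''| → ∞, then u ≡ 0. Consequently, any two bounded solutions of the same Poisson problem -Δu = f in Ω subject to the periodic boundary conditions coincide, so bounded solutions of such problems are unique. -/
open Real MeasureTheory Filter Topology
open scoped Classical

noncomputable section

namespace PeriodicCriticalSystem

/-- Euclidean space `ℝ^N`. -/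
abbrev Euc (N : ℕ) : Type := EuclideanSpace ℝ (Fin N)

/-- The `i`-th standard coordinate vector `e_i`. -/
def e (N : ℕ) (i : Fin N) : Euc N := EuclideanSpace.single i 1

/-- The strip `Ω = {y : |y_i| ≤ L/2, i = 1,…,k}`. -/
def strip (N k : ℕ) (L : ℝ) : Set (Euc N) :=
  {y : Euc N | ∀ i : Fin N, (i : ℕ) < k → |y i| ≤ L / 2}

/-- The `i`-th partial derivative. -/
def pd {N : ℕ} (i : Fin N) (u : Euc N → ℝ) (y : Euc N) : ℝ := fderiv ℝ u y (e N i)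

/-- The Laplacian `Δu = Σ_i ∂²u/∂y_i²`. -/
def lap {N : ℕ} (u : Euc N → ℝ) (y : Euc N) : ℝ :=
  ∑ i : Fin N, iteratedDeriv 2 (fun t : ℝ => u (y + t • e N i)) 0

/-- The norm `|y''|` of the last `N - k` coordinates. -/
def tailNorm {N : ℕ} (k : ℕ) (y : Euc N) : ℝ :=
  Real.sqrt (∑ i : Fin N, if k ≤ (i : ℕ) then (y i) ^ 2 else 0)

/-- The periodic boundary conditions on the strip, together with decay as `|y''| → ∞`. -/
structure PeriodicBC (N k : ℕ) (L : ℝ) (u : Euc N → ℝ) : Prop where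
  per : ∀ i : Fin N, (i : ℕ) < k → ∀ y : Euc N, y i = -(L / 2) → u (y + L • e N i) = u y
  per_deriv : ∀ i : Fin N, (i : ℕ) < k → ∀ y : Euc N, y i = -(L / 2) →
    pd i u (y + L • e N i) = pd i u y
  decay : ∀ ε : ℝ, 0 < ε → ∃ R : ℝ, ∀ y ∈ strip N k L, R ≤ tailNorm k y → |u y| < ε

/-- The critical Sobolev exponent `2* = 2N/(N-2)`. -/
def tS (N : ℕ) : ℝ := 2 * (N : ℝ) / ((N : ℝ) - 2)

/-- Conditions (A₁) and (A₂) on a coefficient function `K`. -/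
structure CondA (N k : ℕ) (K : Euc N → ℝ) (a β : Fin N → ℝ) (βm βM σ : ℝ) : Prop where
  periodic : ∀ i : Fin N, (i : ℕ) < k → ∀ y : Euc N, K (y + e N i) = K y
  bounded : ∃ M : ℝ, ∀ y : Euc N, |K y| ≤ M
  a_ne : ∀ i : Fin N, a i ≠ 0
  β_gt : ∀ i : Fin N, (N : ℝ) - 2 < β i
  β_lt : ∀ i : Fin N, β i < (N : ℝ)
  βm_le : ∀ i : Fin N, βm ≤ β i
  βm_mem : ∃ i : Fin N, β i = βm
  le_βM : ∀ i : Fin N, β i ≤ βM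
  βM_mem : ∃ i : Fin N, β i = βM
  βM_le : βM ≤ βm * (1 + 1 / ((N : ℝ) - 2))
  σ_pos : 0 < σ
  expansion : ∃ δ C : ℝ, 0 < δ ∧ 0 < C ∧ ∀ x : Euc N, ‖x‖ < δ →
    |K x - 1 - ∑ i : Fin N, a i * |x i| ^ (β i)| ≤ C * ‖x‖ ^ (βM + σ)
  neg_sum : (∑ i ∈ Finset.univ.filter (fun i => β i = βm), a i) < 0

/-- The standard bubble `W_{x,μ}`. -/
def Wb (N : ℕ) (x : Euc N) (μ : ℝ) (y : Euc N) : ℝ :=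
  ((N : ℝ) * ((N : ℝ) - 2)) ^ (((N : ℝ) - 2) / 4) * μ ^ (((N : ℝ) - 2) / 2) /
    (1 + μ ^ 2 * ‖y - x‖ ^ 2) ^ (((N : ℝ) - 2) / 2)

/-- The synchronized bubble `U_{x,μ} = s W_{x,μ}`. -/
def Ub (N : ℕ) (s : ℝ) (x : Euc N) (μ : ℝ) (y : Euc N) : ℝ := s * Wb N x μ y

/-- The synchronized bubble `V_{x,μ} = κ s W_{x,μ}`. -/
def Vb (N : ℕ) (s κ : ℝ) (x : Euc N) (μ : ℝ) (y : Euc N) : ℝ := κ * s * Wb N x μ y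

/-- The algebraic relations defining the synchronization constants `s` and `κ`. -/
def SyncConst (N : ℕ) (s κ : ℝ) : Prop :=
  0 < s ∧ 0 < κ ∧ s ^ (tS N - 2) = 2 / (2 + κ ^ (tS N / 2)) ∧
    2 + κ ^ (tS N / 2) - κ ^ (tS N / 2 - 1) - 2 * κ ^ (tS N - 1) = 0

/-- The lattice `Q_k` of integer points in the first `k` coordinates. -/
def Qlat (N k : ℕ) : Set (Euc N) :=
  {y : Euc N | (∀ i : Fin N, ∃ m : ℤ, y i = (m : ℝ)) ∧ ∀ i : Fin N, k ≤ (i : ℕ) → y i = 0}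

/-- `P` enumerates the lattice `Q_k` with `P 0 = 0`. -/
def LatticeEnum (N k : ℕ) (P : ℕ → Euc N) : Prop :=
  Function.Injective P ∧ Set.range P = Qlat N k ∧ P 0 = 0

/-- The area `ω_{N-1}` of the unit sphere `S^{N-1}`. -/
def sphereArea (N : ℕ) : ℝ := (N : ℝ) * (volume (Metric.ball (0 : Euc N) 1)).toReal

/-- The fundamental solution `Γ(y,z)` of `-Δ`. -/
def Γfun (N : ℕ) (y z : Euc N) : ℝ :=
  1 / (((N : ℝ) - 2) * sphereArea N * ‖y - z‖ ^ ((N : ℝ) - 2))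

/-- The Green's function of `-Δ` on the strip with periodic boundary conditions. -/
def Green (N : ℕ) (L : ℝ) (P : ℕ → Euc N) (y z : Euc N) : ℝ :=
  ∑' j : ℕ, Γfun N (y + L • P j) z

/-- The projected bubble `PU_{x,μ}`. -/
def PU (N k : ℕ) (L : ℝ) (P : ℕ → Euc N) (s κ : ℝ) (x : Euc N) (μ : ℝ) (y : Euc N) : ℝ :=
  ∫ z in strip N k L, Green N L P y z *
    (Ub N s x μ z ^ (tS N - 1) +
      (1 / 2) * Ub N s x μ z ^ (tS N / 2 - 1) * Vb N s κ x μ z ^ (tS N / 2))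

/-- The projected bubble `PV_{x,μ}`. -/
def PV (N k : ℕ) (L : ℝ) (P : ℕ → Euc N) (s κ : ℝ) (x : Euc N) (μ : ℝ) (y : Euc N) : ℝ :=
  ∫ z in strip N k L, Green N L P y z *
    (Vb N s κ x μ z ^ (tS N - 1) +
      (1 / 2) * Vb N s κ x μ z ^ (tS N / 2 - 1) * Ub N s x μ z ^ (tS N / 2))

/-- The translated centers `x_j = x - L P_j`. -/
def xc {N : ℕ} (L : ℝ) (P : ℕ → Euc N) (x : Euc N) (j : ℕ) : Euc N := x - L • P j

/-- The extra weight `σ(y)`. -/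
def σw {N : ℕ} (x : Euc N) (μ τ : ℝ) (y : Euc N) : ℝ :=
  min 1 (((1 + μ * ‖y - x‖) / μ) ^ (τ - 1))

/-- The weight defining the `*` norm. -/
def wStar (N : ℕ) (L : ℝ) (P : ℕ → Euc N) (x : Euc N) (μ τ : ℝ) (y : Euc N) : ℝ :=
  σw x μ τ y *
    ∑' j : ℕ, μ ^ (((N : ℝ) - 2) / 2) / (1 + μ * ‖y - xc L P x j‖) ^ (((N : ℝ) - 2) / 2 + τ)

/-- The weight defining the `**` norm. -/
def wStarStar (N : ℕ) (L : ℝ) (P : ℕ → Euc N) (x : Euc N) (μ τ : ℝ) (y : Euc N) : ℝ :=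
  σw x μ τ y *
    ∑' j : ℕ, μ ^ (((N : ℝ) + 2) / 2) / (1 + μ * ‖y - xc L P x j‖) ^ (((N : ℝ) + 2) / 2 + τ)

/-- The `*` norm. -/
def normStar (N k : ℕ) (L : ℝ) (P : ℕ → Euc N) (x : Euc N) (μ τ : ℝ) (u : Euc N → ℝ) : ℝ :=
  sSup ((fun y => |u y| / wStar N L P x μ τ y) '' strip N k L)

/-- The `**` norm. -/
def normStarStar (N k : ℕ) (L : ℝ) (P : ℕ → Euc N) (x : Euc N) (μ τ : ℝ) (f : Euc N → ℝ) : ℝ :=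
  sSup ((fun y => |f y| / wStarStar N L P x μ τ y) '' strip N k L)

/-- Finiteness of the `*` norm. -/
def FiniteStar (N k : ℕ) (L : ℝ) (P : ℕ → Euc N) (x : Euc N) (μ τ : ℝ) (u : Euc N → ℝ) : Prop :=
  BddAbove ((fun y => |u y| / wStar N L P x μ τ y) '' strip N k L)

/-- Finiteness of the `**` norm. -/
def FiniteStarStar (N k : ℕ) (L : ℝ) (P : ℕ → Euc N) (x : Euc N) (μ τ : ℝ)
    (f : Euc N → ℝ) : Prop :=
  BddAbove ((fun y => |f y| / wStarStar N L P x μ τ y) '' strip N k L)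

/-- Membership of a pair in the space `X`. -/
def MemX (N k : ℕ) (L : ℝ) (P : ℕ → Euc N) (x : Euc N) (μ τ : ℝ) (u v : Euc N → ℝ) : Prop :=
  PeriodicBC N k L u ∧ PeriodicBC N k L v ∧
    FiniteStar N k L P x μ τ u ∧ FiniteStar N k L P x μ τ v

/-- Membership of a pair in the space `Y`. -/
def MemY (N k : ℕ) (L : ℝ) (P : ℕ → Euc N) (x : Euc N) (μ τ : ℝ) (f g : Euc N → ℝ) : Prop :=
  FiniteStarStar N k L P x μ τ f ∧ FiniteStarStar N k L P x μ τ g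

/-- The operator `(-Δ)^{-1}` given by the Green's function. -/
def invLap (N k : ℕ) (L : ℝ) (P : ℕ → Euc N) (f : Euc N → ℝ) (y : Euc N) : ℝ :=
  ∫ z in strip N k L, Green N L P z y * f z

/-- `Y_h`: derivatives of `U_{x,μ}` in `x_h` (`h < N`) and in `μ` (`h = N+1`). -/
def Yd (N : ℕ) (s : ℝ) (x : Euc N) (μ : ℝ) (h : Fin (N + 1)) (y : Euc N) : ℝ :=
  if hh : (h : ℕ) < N then fderiv ℝ (fun x' => Ub N s x' μ y) x (e N ⟨(h : ℕ), hh⟩)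
  else deriv (fun μ' => Ub N s x μ' y) μ

/-- `Z_h`: derivatives of `V_{x,μ}`. -/
def Zd (N : ℕ) (s κ : ℝ) (x : Euc N) (μ : ℝ) (h : Fin (N + 1)) (y : Euc N) : ℝ :=
  if hh : (h : ℕ) < N then fderiv ℝ (fun x' => Vb N s κ x' μ y) x (e N ⟨(h : ℕ), hh⟩)
  else deriv (fun μ' => Vb N s κ x μ' y) μ

/-- `∂_h PU_{x,μ}`. -/
def dPU (N k : ℕ) (L : ℝ) (P : ℕ → Euc N) (s κ : ℝ) (x : Euc N) (μ : ℝ) (h : Fin (N + 1))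
    (y : Euc N) : ℝ :=
  if hh : (h : ℕ) < N then fderiv ℝ (fun x' => PU N k L P s κ x' μ y) x (e N ⟨(h : ℕ), hh⟩)
  else deriv (fun μ' => PU N k L P s κ x μ' y) μ

/-- `∂_h PV_{x,μ}`. -/
def dPV (N k : ℕ) (L : ℝ) (P : ℕ → Euc N) (s κ : ℝ) (x : Euc N) (μ : ℝ) (h : Fin (N + 1))
    (y : Euc N) : ℝ :=
  if hh : (h : ℕ) < N then fderiv ℝ (fun x' => PV N k L P s κ x' μ y) x (e N ⟨(h : ℕ), hh⟩)
  else deriv (fun μ' => PV N k L P s κ x μ' y) μ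

/-- `α(h) = 1` for `h = 1,…,N` and `α(N+1) = -1`. -/
def αe (N : ℕ) (h : Fin (N + 1)) : ℝ := if (h : ℕ) < N then 1 else -1

/-- Membership of a pair in the space `E`. -/
def MemE (N k : ℕ) (L : ℝ) (P : ℕ → Euc N) (s κ : ℝ) (x : Euc N) (μ τ : ℝ)
    (u v : Euc N → ℝ) : Prop :=
  MemX N k L P x μ τ u v ∧
    (∀ h : Fin (N + 1),
      (∫ y in strip N k L, u y * Ub N s x μ y ^ (tS N - 2) * Yd N s x μ h y) = 0) ∧
    (∀ h : Fin (N + 1),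
      (∫ y in strip N k L, v y * Vb N s κ x μ y ^ (tS N - 2) * Zd N s κ x μ h y) = 0)

/-- Membership of a pair in the space `F`. -/
def MemF (N k : ℕ) (L : ℝ) (P : ℕ → Euc N) (s κ : ℝ) (x : Euc N) (μ : ℝ)
    (f g : Euc N → ℝ) : Prop :=
  (∀ h : Fin (N + 1), (∫ y in strip N k L, f y * dPU N k L P s κ x μ h y) = 0) ∧
  (∀ h : Fin (N + 1), (∫ y in strip N k L, g y * dPV N k L P s κ x μ h y) = 0)

/-- The admissible range of the parameters `(x, μ)` relative to `L`. -/
def Admissible (N : ℕ) (θ C0 β : ℝ) (L : ℝ) (x : Euc N) (μ : ℝ) : Prop :=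
  1 ≤ μ ∧ 1 ≤ L ∧ ‖x‖ ≤ μ ^ (-(1 + θ)) ∧
    μ * L ^ (-(((N : ℝ) - 2) / (β - ((N : ℝ) - 2)))) ∈ Set.Icc (C0 / 2) (2 * C0)

/-- First component of the linearized operator. -/
def lin1 (N k : ℕ) (L : ℝ) (P : ℕ → Euc N) (s κ : ℝ) (K1 : Euc N → ℝ) (x : Euc N) (μ : ℝ)
    (ω1 ω2 : Euc N → ℝ) (y : Euc N) : ℝ :=
  K1 y * PU N k L P s κ x μ y ^ (tS N - 2) * ω1 y -
    (1 / ((N : ℝ) + 2)) * PU N k L P s κ x μ y ^ ((4 - (N : ℝ)) / ((N : ℝ) - 2)) *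
      PV N k L P s κ x μ y ^ ((N : ℝ) / ((N : ℝ) - 2)) * ω1 y -
    ((N : ℝ) / (2 * ((N : ℝ) + 2))) * PU N k L P s κ x μ y ^ (2 / ((N : ℝ) - 2)) *
      PV N k L P s κ x μ y ^ (2 / ((N : ℝ) - 2)) * ω2 y

/-- Second component of the linearized operator. -/
def lin2 (N k : ℕ) (L : ℝ) (P : ℕ → Euc N) (s κ : ℝ) (K2 : Euc N → ℝ) (x : Euc N) (μ : ℝ)
    (ω1 ω2 : Euc N → ℝ) (y : Euc N) : ℝ :=
  K2 y * PV N k L P s κ x μ y ^ (tS N - 2) * ω2 y -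
    (1 / ((N : ℝ) + 2)) * PV N k L P s κ x μ y ^ ((4 - (N : ℝ)) / ((N : ℝ) - 2)) *
      PU N k L P s κ x μ y ^ ((N : ℝ) / ((N : ℝ) - 2)) * ω2 y -
    ((N : ℝ) / (2 * ((N : ℝ) + 2))) * PV N k L P s κ x μ y ^ (2 / ((N : ℝ) - 2)) *
      PU N k L P s κ x μ y ^ (2 / ((N : ℝ) - 2)) * ω1 y

/-- First component `ℓ₁` of the error term. -/
def ell1 (N k : ℕ) (L : ℝ) (P : ℕ → Euc N) (s κ : ℝ) (K1 : Euc N → ℝ) (x : Euc N) (μ : ℝ)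
    (y : Euc N) : ℝ :=
  K1 y * PU N k L P s κ x μ y ^ (tS N - 1) - Ub N s x μ y ^ (tS N - 1) -
    (1 / 2) * (Ub N s x μ y ^ (tS N / 2 - 1) * Vb N s κ x μ y ^ (tS N / 2) -
      PU N k L P s κ x μ y ^ (tS N / 2 - 1) * PV N k L P s κ x μ y ^ (tS N / 2))

/-- Second component `ℓ₂` of the error term. -/
def ell2 (N k : ℕ) (L : ℝ) (P : ℕ → Euc N) (s κ : ℝ) (K2 : Euc N → ℝ) (x : Euc N) (μ : ℝ)
    (y : Euc N) : ℝ :=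
  K2 y * PV N k L P s κ x μ y ^ (tS N - 1) - Vb N s κ x μ y ^ (tS N - 1) -
    (1 / 2) * (Vb N s κ x μ y ^ (tS N / 2 - 1) * Ub N s x μ y ^ (tS N / 2) -
      PV N k L P s κ x μ y ^ (tS N / 2 - 1) * PU N k L P s κ x μ y ^ (tS N / 2))

/-- First component `N₁` of the higher order term. -/
def Nl1 (N k : ℕ) (L : ℝ) (P : ℕ → Euc N) (s κ : ℝ) (K1 : Euc N → ℝ) (x : Euc N) (μ : ℝ)
    (ω1 ω2 : Euc N → ℝ) (y : Euc N) : ℝ :=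
  K1 y * ((max (PU N k L P s κ x μ y + ω1 y) 0) ^ (tS N - 1) -
      PU N k L P s κ x μ y ^ (tS N - 1) -
      (tS N - 1) * PU N k L P s κ x μ y ^ (tS N - 2) * ω1 y) +
    (1 / 2) * ((PU N k L P s κ x μ y + ω1 y) ^ (2 / ((N : ℝ) - 2)) *
        (PV N k L P s κ x μ y + ω2 y) ^ ((N : ℝ) / ((N : ℝ) - 2)) -
      PU N k L P s κ x μ y ^ (2 / ((N : ℝ) - 2)) *
        PV N k L P s κ x μ y ^ ((N : ℝ) / ((N : ℝ) - 2))) -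
    (1 / ((N : ℝ) - 2)) * PU N k L P s κ x μ y ^ ((4 - (N : ℝ)) / ((N : ℝ) - 2)) *
      PV N k L P s κ x μ y ^ ((N : ℝ) / ((N : ℝ) - 2)) * ω1 y -
    ((N : ℝ) / (2 * ((N : ℝ) - 2))) * PU N k L P s κ x μ y ^ (2 / ((N : ℝ) - 2)) *
      PV N k L P s κ x μ y ^ (2 / ((N : ℝ) - 2)) * ω2 y

/-- Second component `N₂` of the higher order term. -/
def Nl2 (N k : ℕ) (L : ℝ) (P : ℕ → Euc N) (s κ : ℝ) (K2 : Euc N → ℝ) (x : Euc N) (μ : ℝ)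
    (ω1 ω2 : Euc N → ℝ) (y : Euc N) : ℝ :=
  K2 y * ((max (PV N k L P s κ x μ y + ω2 y) 0) ^ (tS N - 1) -
      PV N k L P s κ x μ y ^ (tS N - 1) -
      (tS N - 1) * PV N k L P s κ x μ y ^ (tS N - 2) * ω2 y) +
    (1 / 2) * ((PV N k L P s κ x μ y + ω2 y) ^ (2 / ((N : ℝ) - 2)) *
        (PU N k L P s κ x μ y + ω1 y) ^ ((N : ℝ) / ((N : ℝ) - 2)) -
      PV N k L P s κ x μ y ^ (2 / ((N : ℝ) - 2)) *
        PU N k L P s κ x μ y ^ ((N : ℝ) / ((N : ℝ) - 2))) -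
    (1 / ((N : ℝ) - 2)) * PV N k L P s κ x μ y ^ ((4 - (N : ℝ)) / ((N : ℝ) - 2)) *
      PU N k L P s κ x μ y ^ ((N : ℝ) / ((N : ℝ) - 2)) * ω2 y -
    ((N : ℝ) / (2 * ((N : ℝ) - 2))) * PV N k L P s κ x μ y ^ (2 / ((N : ℝ) - 2)) *
      PU N k L P s κ x μ y ^ (2 / ((N : ℝ) - 2)) * ω1 y

/-!
The heart of the matter is a maximum principle on the strip. Suppose `u` is harmonic on `Ω`,
satisfies the periodic boundary conditions, decays as `|y''| → ∞`, and `u > 0` somewhere. For small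
`ε > 0` the function `u + ε |y''|²` attains its maximum over `Ω ∩ {|y''| ≤ R}` at a point with
`|y''| < R`. There each second derivative `∂²u/∂y_i²` with `i ≤ k` is `≤ 0`: at an interior point
this is the usual test, and on a face `y_i = ±L/2` the boundary conditions glue the two faces,
so the one-sided inequalities at both faces combine. Each normal second derivative is
`≤ -2ε`, contradicting `Δu = 0`. Applying this to `±u` gives `u = 0` on `Ω`. Uniqueness follows
by taking `u = u₁ - u₂`, and the Liouville statement by folding `ℝ^N` onto `Ω` by periodicity.
-/

end PeriodicCriticalSystem

open Set

section OneVariable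

variable {g : ℝ → ℝ} {s : Set ℝ} {x y a b : ℝ}

lemma IsMaxOn.sub_mul_deriv_nonpos (hmax : IsMaxOn g s x) (hs : Convex ℝ s) (hx : x ∈ s)
    (hy : y ∈ s) (hg : DifferentiableAt ℝ g x) : (y - x) * deriv g x ≤ 0 := by
  have hcone : y - x ∈ posTangentConeAt s x :=
    sub_mem_posTangentConeAt_of_segment_subset (hs.segment_subset hx hy)
  simpa [mul_comm] using
    (hmax.localize.hasFDerivWithinAt_nonpos hg.hasDerivAt.hasFDerivAt.hasFDerivWithinAt hcone)

lemma deriv_eq_zero_of_isMaxOn_Icc_of_periodic (hg : Differentiable ℝ g) (hab : a < b)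
    (hx : x ∈ Icc a b) (hmax : IsMaxOn g (Icc a b) x) (hper : g b = g a)
    (hperd : deriv g b = deriv g a) : deriv g x = 0 := by
  have ha : a ∈ Icc a b := left_mem_Icc.2 hab.le
  have hb : b ∈ Icc a b := right_mem_Icc.2 hab.le
  by_cases hint : x ∈ Ioo a b
  · have h₁ := hmax.sub_mul_deriv_nonpos (convex_Icc a b) hx ha (hg x)
    have h₂ := hmax.sub_mul_deriv_nonpos (convex_Icc a b) hx hb (hg x)
    nlinarith [hint.1, hint.2]
  -- At an endpoint, periodicity makes both endpoints maximizers with the same derivative.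
  have hend : x = a ∨ x = b := by
    simp only [mem_Ioo, not_and_or, not_lt] at hint
    rcases hint with h | h
    · exact .inl (le_antisymm h hx.1)
    · exact .inr (le_antisymm hx.2 h)
  have hga : g x = g a := by rcases hend with rfl | rfl <;> simp [hper]
  have hmaxa : IsMaxOn g (Icc a b) a := fun t ht => (hmax ht).trans_eq hga
  have hmaxb : IsMaxOn g (Icc a b) b := fun t ht => (hmaxa ht).trans_eq hper.symm
  have h₁ := hmaxa.sub_mul_deriv_nonpos (convex_Icc a b) ha hb (hg a)
  have h₂ := hmaxb.sub_mul_deriv_nonpos (convex_Icc a b) hb ha (hg b)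
  rw [hperd] at h₂
  have h₀ : deriv g a = 0 := by nlinarith
  rcases hend with rfl | rfl
  · exact h₀
  · rw [hperd, h₀]

lemma iteratedDeriv_two_nonpos_of_isMaxOn (hg : ContDiff ℝ 2 g) (hs : Convex ℝ s) (hx : x ∈ s)
    (hy : y ∈ s) (hyx : y ≠ x) (hmax : IsMaxOn g s x) (hd : deriv g x = 0) :
    iteratedDeriv 2 g x ≤ 0 := by
  by_contra! hpos
  set c := iteratedDeriv 2 g x / 4
  have hg' : Differentiable ℝ (deriv g) :=
    ((contDiff_succ_iff_deriv (n := 1)).mp hg).2.2.differentiable one_ne_zero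
  -- `g - c (· - x)²` still has a positive second derivative, hence a local minimum at `x`.
  set h : ℝ → ℝ := fun t => g t - c * (t - x) ^ 2
  have hderiv : deriv h = fun t => deriv g t - c * (2 * (t - x)) := by
    funext t
    exact ((hg.differentiable two_ne_zero t).hasDerivAt.sub
      (((hasDerivAt_id t).sub_const x).pow 2 |>.const_mul c) |>.deriv).trans (by simp)
  have hmin : IsLocalMin h x := by
    refine isLocalMin_of_deriv_deriv_pos ?_ (by simp [hderiv, hd])
      (hg.continuous.sub (by fun_prop)).continuousAt
    have : HasDerivAt (deriv h) (iteratedDeriv 2 g x - c * 2) x := by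
      rw [hderiv, iteratedDeriv_succ, iteratedDeriv_one]
      exact (hg' x).hasDerivAt.sub ((((hasDerivAt_id x).sub_const x).const_mul 2).const_mul c
        |>.congr_deriv (by simp))
    rw [this.deriv]
    simp only [c]
    linarith
  have hnear : Tendsto (fun r : ℝ => x + r * (y - x)) (𝓝[>] 0) (𝓝 x) := by
    have : Continuous fun r : ℝ => x + r * (y - x) := by fun_prop
    simpa using (this.tendsto 0).mono_left nhdsWithin_le_nhds
  obtain ⟨r, hr, hr0, hr1⟩ := ((hnear.eventually hmin).and (Ioc_mem_nhdsGT one_pos)).exists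
  have hle : g (x + r * (y - x)) ≤ g x := hmax (hs.add_smul_sub_mem hx hy ⟨hr0.le, hr1⟩)
  have hlow : g x + c * (r * (y - x)) ^ 2 ≤ g (x + r * (y - x)) := by
    simp only [h, sub_self, add_sub_cancel_left] at hr
    linarith
  have : 0 < c * (r * (y - x)) ^ 2 := by
    have := sub_ne_zero.2 hyx
    have : 0 < c := div_pos hpos four_pos
    positivity
  linarith

lemma IsLocalMax.iteratedDeriv_two_nonpos (hg : ContDiff ℝ 2 g) (hmax : IsLocalMax g x) :
    iteratedDeriv 2 g x ≤ 0 := by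
  obtain ⟨δ, hδ, hball⟩ := Metric.eventually_nhds_iff_ball.1 hmax
  refine iteratedDeriv_two_nonpos_of_isMaxOn hg (convex_ball x δ) (Metric.mem_ball_self hδ)
    (y := x + δ / 2) ?_ (by linarith) hball hmax.deriv_eq_zero
  rw [Metric.mem_ball, Real.dist_eq, add_sub_cancel_left, abs_of_pos (half_pos hδ)]
  linarith

lemma iteratedDeriv_two_add_le_of_isLocalMax {A : ℝ → ℝ} {c ε : ℝ} (hA : ContDiff ℝ 2 A)
    (hmax : IsLocalMax (fun t => A t + ε * (2 * c * t + t ^ 2)) 0) :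
    iteratedDeriv 2 A 0 + 2 * ε ≤ 0 := by
  have hquad : iteratedDeriv 2 (fun t : ℝ => 2 * c * t + t ^ 2) 0 = 2 := by
    have : deriv (fun t : ℝ => 2 * c * t + t ^ 2) = fun t => 2 * c + 2 * t := by
      ext t
      exact ((hasDerivAt_id t).const_mul (2 * c) |>.add (hasDerivAt_pow 2 t)).deriv.trans
        (by simp)
    rw [iteratedDeriv_succ, iteratedDeriv_one, this]
    simp
  have hsum := hmax.iteratedDeriv_two_nonpos (hA.add (by fun_prop))
  rw [iteratedDeriv_fun_add hA.contDiffAt (by fun_prop), iteratedDeriv_const_mul_field,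
    hquad] at hsum
  linarith

end OneVariable

namespace PeriodicCriticalSystem

section Lines

variable {N : ℕ}

lemma add_smul_e_apply_self (z : Euc N) (t : ℝ) (i : Fin N) : (z + t • e N i) i = z i + t := by
  simp [e]

lemma add_smul_e_apply_of_ne (z : Euc N) (t : ℝ) {i j : Fin N} (h : j ≠ i) :
    (z + t • e N i) j = z j := by
  simp [e, h]

lemma contDiff_line {u : Euc N → ℝ} (hu : ContDiff ℝ 2 u) (z : Euc N) (i : Fin N) :
    ContDiff ℝ 2 fun t : ℝ => u (z + t • e N i) := by
  fun_prop

lemma hasDerivAt_line {u : Euc N → ℝ} (hu : Differentiable ℝ u) (z : Euc N) (i : Fin N)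
    (t : ℝ) : HasDerivAt (fun s : ℝ => u (z + s • e N i)) (pd i u (z + t • e N i)) t := by
  have : HasDerivAt (fun s : ℝ => z + s • e N i) (e N i) t := by
    simpa using ((hasDerivAt_id t).smul_const (e N i)).const_add z
  exact (hu _).hasFDerivAt.comp_hasDerivAt t this

lemma periodic_line {u : Euc N → ℝ} {L : ℝ} {i : Fin N} (hper : ∀ y, u (y + L • e N i) = u y)
    (z : Euc N) : Function.Periodic (fun t : ℝ => u (z + t • e N i)) L := fun t => by
  simp only [add_smul, ← add_assoc, hper]

lemma lap_sub {u v : Euc N → ℝ} (hu : ContDiff ℝ 2 u) (hv : ContDiff ℝ 2 v) (y : Euc N) :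
    lap (fun w => u w - v w) y = lap u y - lap v y := by
  simp only [lap, ← Finset.sum_sub_distrib]
  exact Finset.sum_congr rfl fun i _ =>
    iteratedDeriv_fun_sub (contDiff_line hu y i).contDiffAt (contDiff_line hv y i).contDiffAt

lemma lap_neg (u : Euc N → ℝ) (y : Euc N) : lap (fun w => -u w) y = -lap u y := by
  simp [lap]

lemma pd_sub {u v : Euc N → ℝ} (hu : Differentiable ℝ u) (hv : Differentiable ℝ v) (i : Fin N)
    (y : Euc N) : pd i (fun w => u w - v w) y = pd i u y - pd i v y := by
  simp [pd, fderiv_fun_sub (hu y) (hv y)]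

lemma pd_neg (u : Euc N → ℝ) (i : Fin N) (y : Euc N) : pd i (fun w => -u w) y = -pd i u y := by
  simp [pd]

lemma pd_add_of_periodic {u : Euc N → ℝ} {c : Euc N} (hper : ∀ w, u (w + c) = u w) (i : Fin N)
    (y : Euc N) : pd i u (y + c) = pd i u y := by
  rw [pd, pd, ← fderiv_comp_add_right, funext hper]

end Lines

section Tail

variable {N k : ℕ}

-- `|y''|²`; `tailNorm k y` unfolds to `√(tailSq k y)`.
def tailSq (k : ℕ) (y : Euc N) : ℝ := ∑ i : Fin N, if k ≤ (i : ℕ) then y i ^ 2 else 0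

lemma tailSq_nonneg (y : Euc N) : 0 ≤ tailSq k y :=
  Finset.sum_nonneg fun i _ => by split_ifs <;> positivity

lemma continuous_tailSq : Continuous (tailSq (N := N) k) :=
  continuous_finsetSum _ fun i _ => by split_ifs <;> fun_prop

lemma tailSq_add_smul_e (z : Euc N) (t : ℝ) (i : Fin N) :
    tailSq k (z + t • e N i) = tailSq k z + if k ≤ (i : ℕ) then 2 * z i * t + t ^ 2 else 0 := by
  have hterm : ∀ j : Fin N, (if k ≤ (j : ℕ) then (z + t • e N i) j ^ 2 else 0) =
      (if k ≤ (j : ℕ) then z j ^ 2 else 0) +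
        if j = i then (if k ≤ (i : ℕ) then 2 * z i * t + t ^ 2 else 0) else 0 := by
    intro j
    rcases eq_or_ne j i with rfl | hji
    · rw [add_smul_e_apply_self, if_pos rfl]
      split_ifs <;> ring
    · simp [add_smul_e_apply_of_ne _ _ hji, hji]
  simp only [tailSq, hterm, Finset.sum_add_distrib, Finset.sum_ite_eq', Finset.mem_univ, if_true]

lemma isClosed_strip (L : ℝ) : IsClosed (strip N k L) := by
  simp only [strip, ofPred_forall]
  exact isClosed_iInter fun i => isClosed_iInter fun _ => isClosed_le (by fun_prop) continuous_const

lemma norm_sq_le_of_mem_strip {L : ℝ} {y : Euc N} (hy : y ∈ strip N k L) :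
    ‖y‖ ^ 2 ≤ N * (L / 2) ^ 2 + tailSq k y := by
  have hcoord : ∀ i : Fin N, y i ^ 2 ≤ (L / 2) ^ 2 + if k ≤ (i : ℕ) then y i ^ 2 else 0 := by
    intro i
    split_ifs with hki
    · nlinarith
    · rw [add_zero, ← sq_abs]
      exact pow_le_pow_left₀ (abs_nonneg _) (hy i (not_le.1 hki)) 2
  calc ‖y‖ ^ 2 = ∑ i, y i ^ 2 := by simp [EuclideanSpace.norm_sq_eq]
    _ ≤ ∑ i : Fin N, ((L / 2) ^ 2 + if k ≤ (i : ℕ) then y i ^ 2 else 0) :=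
      Finset.sum_le_sum fun i _ => hcoord i
    _ = N * (L / 2) ^ 2 + tailSq k y := by simp [Finset.sum_add_distrib, tailSq]

lemma isCompact_strip_inter_tailSq_le (L r : ℝ) :
    IsCompact (strip N k L ∩ {y | tailSq k y ≤ r}) := by
  refine Metric.isCompact_of_isClosed_isBounded
    ((isClosed_strip L).inter (isClosed_le continuous_tailSq continuous_const)) ?_
  refine (Metric.isBounded_closedBall (x := 0) (r := √(N * (L / 2) ^ 2 + r))).subset fun y hy => ?_
  rw [Metric.mem_closedBall, dist_zero_right]
  exact Real.le_sqrt_of_sq_le ((norm_sq_le_of_mem_strip hy.1).trans (by linarith [hy.2.out]))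

end Tail

section MaximumPrinciple

variable {N k : ℕ} {L : ℝ} {u : Euc N → ℝ}

lemma iteratedDeriv_two_line_nonpos_of_periodic {i : Fin N} {z : Euc N} (hu : ContDiff ℝ 2 u)
    (hL : 0 < L) (hper : ∀ y : Euc N, y i = -(L / 2) → u (y + L • e N i) = u y)
    (hperd : ∀ y : Euc N, y i = -(L / 2) → pd i u (y + L • e N i) = pd i u y)
    (hz : |z i| ≤ L / 2) (hmax : ∀ t : ℝ, |z i + t| ≤ L / 2 → u (z + t • e N i) ≤ u z) :
    iteratedDeriv 2 (fun t : ℝ => u (z + t • e N i)) 0 ≤ 0 := by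
  have hud : Differentiable ℝ u := hu.differentiable two_ne_zero
  set g : ℝ → ℝ := fun t => u (z + t • e N i)
  set a := -(L / 2) - z i with ha
  set b := L / 2 - z i with hb
  have hab : a < b := by linarith
  have hIcc : ∀ t, t ∈ Icc a b ↔ |z i + t| ≤ L / 2 := fun t => by
    rw [abs_le, mem_Icc]
    constructor <;> rintro ⟨h₁, h₂⟩ <;> constructor <;> linarith
  have h0 : (0 : ℝ) ∈ Icc a b := (hIcc 0).2 (by simpa using hz)
  have hgmax : IsMaxOn g (Icc a b) 0 := fun t ht => by
    simpa [g] using hmax t ((hIcc t).1 ht)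
  -- The two ends of the segment through `z` are identified by the boundary conditions.
  have hface : (z + a • e N i) i = -(L / 2) := by rw [add_smul_e_apply_self]; ring
  have hshift : z + b • e N i = z + a • e N i + L • e N i := by
    rw [add_assoc, ← add_smul]; congr 2; ring
  have hper_g : g b = g a := by simp only [g]; rw [hshift, hper _ hface]
  have hperd_g : deriv g b = deriv g a := by
    rw [(hasDerivAt_line hud z i b).deriv, (hasDerivAt_line hud z i a).deriv, hshift,
      hperd _ hface]
  obtain ⟨y, hy, hy0⟩ : ∃ y ∈ Icc a b, y ≠ 0 := by
    by_cases hb0 : b = 0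
    · exact ⟨a, left_mem_Icc.2 hab.le, by linarith⟩
    · exact ⟨b, right_mem_Icc.2 hab.le, hb0⟩
  exact iteratedDeriv_two_nonpos_of_isMaxOn (contDiff_line hu z i) (convex_Icc a b) h0 hy hy0
    hgmax (deriv_eq_zero_of_isMaxOn_Icc_of_periodic (hud.comp (by fun_prop)) hab h0 hgmax hper_g
      hperd_g)

lemma add_smul_e_mem_strip {z : Euc N} (hz : z ∈ strip N k L) {i : Fin N} {t : ℝ}
    (ht : (i : ℕ) < k → |z i + t| ≤ L / 2) : z + t • e N i ∈ strip N k L := by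
  intro j hj
  rcases eq_or_ne j i with rfl | hji
  · rw [add_smul_e_apply_self]; exact ht hj
  · rw [add_smul_e_apply_of_ne _ _ hji]; exact hz j hj

variable {z : Euc N} {ε r : ℝ}

lemma iteratedDeriv_two_line_nonpos_of_isMaxOn {i : Fin N} (hik : (i : ℕ) < k) (hL : 0 < L)
    (hu : ContDiff ℝ 2 u) (hper : ∀ y : Euc N, y i = -(L / 2) → u (y + L • e N i) = u y)
    (hperd : ∀ y : Euc N, y i = -(L / 2) → pd i u (y + L • e N i) = pd i u y)
    (hz : z ∈ strip N k L) (hzr : tailSq k z ≤ r)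
    (hmax : IsMaxOn (fun y => u y + ε * tailSq k y) (strip N k L ∩ {y | tailSq k y ≤ r}) z) :
    iteratedDeriv 2 (fun t : ℝ => u (z + t • e N i)) 0 ≤ 0 := by
  refine iteratedDeriv_two_line_nonpos_of_periodic hu hL hper hperd (hz i hik) fun t ht => ?_
  have hsame : tailSq k (z + t • e N i) = tailSq k z := by
    rw [tailSq_add_smul_e, if_neg (not_le.2 hik), add_zero]
  have := hmax ⟨add_smul_e_mem_strip hz fun _ => ht, hsame.le.trans hzr⟩
  simp only [mem_ofPred_eq, hsame] at this
  linarith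

lemma iteratedDeriv_two_line_add_le_of_isMaxOn {i : Fin N} (hki : k ≤ (i : ℕ))
    (hu : ContDiff ℝ 2 u) (hz : z ∈ strip N k L) (hzr : tailSq k z < r)
    (hmax : IsMaxOn (fun y => u y + ε * tailSq k y) (strip N k L ∩ {y | tailSq k y ≤ r}) z) :
    iteratedDeriv 2 (fun t : ℝ => u (z + t • e N i)) 0 + 2 * ε ≤ 0 := by
  refine iteratedDeriv_two_add_le_of_isLocalMax (contDiff_line hu z i) (c := z i) ?_
  have hnear : ∀ᶠ t in 𝓝 (0 : ℝ), tailSq k (z + t • e N i) < r :=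
    (continuous_tailSq.comp (by fun_prop)).continuousAt.eventually_lt continuousAt_const
      (by simpa using hzr)
  filter_upwards [hnear] with t ht
  have := hmax ⟨add_smul_e_mem_strip hz fun hik => absurd hki (not_le.2 hik), ht.le⟩
  simp only [mem_ofPred_eq, tailSq_add_smul_e, if_pos hki] at this
  rw [zero_smul, add_zero]
  linarith

lemma lap_neg_of_isMaxOn (hk : k < N) (hL : 0 < L) (hε : 0 < ε) (hu : ContDiff ℝ 2 u)
    (hper : ∀ i : Fin N, (i : ℕ) < k → ∀ y : Euc N, y i = -(L / 2) → u (y + L • e N i) = u y)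
    (hperd : ∀ i : Fin N, (i : ℕ) < k → ∀ y : Euc N, y i = -(L / 2) →
      pd i u (y + L • e N i) = pd i u y)
    (hz : z ∈ strip N k L) (hzr : tailSq k z < r)
    (hmax : IsMaxOn (fun y => u y + ε * tailSq k y) (strip N k L ∩ {y | tailSq k y ≤ r}) z) :
    lap u z < 0 := by
  have hdir : ∀ i : Fin N, iteratedDeriv 2 (fun t : ℝ => u (z + t • e N i)) 0 ≤
      if k ≤ (i : ℕ) then -(2 * ε) else 0 := by
    intro i
    split_ifs with hki
    · linarith [iteratedDeriv_two_line_add_le_of_isMaxOn hki hu hz hzr hmax]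
    · have hik := not_le.1 hki
      exact iteratedDeriv_two_line_nonpos_of_isMaxOn hik hL hu (hper i hik) (hperd i hik) hz
        hzr.le hmax
  calc lap u z = ∑ i : Fin N, iteratedDeriv 2 (fun t : ℝ => u (z + t • e N i)) 0 := rfl
    _ < ∑ _i : Fin N, (0 : ℝ) :=
      Finset.sum_lt_sum (fun i _ => (hdir i).trans (by split_ifs <;> linarith))
        ⟨⟨k, hk⟩, Finset.mem_univ _, (hdir _).trans_lt (by rw [if_pos le_rfl]; linarith)⟩
    _ = 0 := Finset.sum_const_zero

end MaximumPrinciple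

namespace PeriodicBC

variable {N k : ℕ} {L : ℝ} {u v : Euc N → ℝ}

theorem nonpos_of_lap_eq_zero (hbc : PeriodicBC N k L u) (hk : k < N) (hL : 0 < L)
    (hu : ContDiff ℝ 2 u) (hlap : ∀ y ∈ strip N k L, lap u y = 0) :
    ∀ y ∈ strip N k L, u y ≤ 0 := by
  intro y₀ hy₀
  by_contra! hpos
  obtain ⟨R₀, hR₀⟩ := hbc.decay (u y₀ / 2) (half_pos hpos)
  set R := max R₀ (tailNorm k y₀) + 1 with hR
  have hR0 : 0 < R := by
    have : 0 ≤ tailNorm k y₀ := Real.sqrt_nonneg _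
    have := le_max_right R₀ (tailNorm k y₀)
    linarith
  -- With `ε R² = u y₀ / 4`, the perturbation cannot push the maximum out to `|y''| = R`.
  set ε := u y₀ / (4 * R ^ 2) with hε_def
  have hε : 0 < ε := by positivity
  have hεR : ε * R ^ 2 = u y₀ / 4 := by rw [hε_def]; field_simp
  have hy₀R : tailSq k y₀ ≤ R ^ 2 :=
    (Real.sqrt_le_iff.1 ((le_max_right _ _).trans (lt_add_one _).le)).2
  obtain ⟨z, hzK, hzmax⟩ := (isCompact_strip_inter_tailSq_le L (R ^ 2)).exists_isMaxOn
    ⟨y₀, hy₀, hy₀R⟩ (hu.continuous.add (continuous_const.mul continuous_tailSq)).continuousOn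
  have hzR : tailSq k z < R ^ 2 := by
    by_contra! hzR
    have hfar : R₀ ≤ tailNorm k z :=
      ((le_max_left _ _).trans (lt_add_one _).le).trans ((Real.le_sqrt' hR0).2 hzR)
    have hsmall := (abs_lt.1 (hR₀ z hzK.1 hfar)).2
    have hle : u y₀ + ε * tailSq k y₀ ≤ u z + ε * tailSq k z := hzmax ⟨hy₀, hy₀R⟩
    have h₁ : ε * tailSq k z ≤ ε * R ^ 2 := mul_le_mul_of_nonneg_left hzK.2 hε.le
    have h₂ : 0 ≤ ε * tailSq k y₀ := mul_nonneg hε.le (tailSq_nonneg y₀)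
    linarith
  exact (lap_neg_of_isMaxOn hk hL hε hu hbc.per hbc.per_deriv hzK.1 hzR hzmax).ne
    (hlap z hzK.1)

theorem neg (hbc : PeriodicBC N k L u) : PeriodicBC N k L fun y => -u y where
  per i hi y hy := by simp only [hbc.per i hi y hy]
  per_deriv i hi y hy := by simp only [pd_neg, hbc.per_deriv i hi y hy]
  decay ε hε := by simpa only [abs_neg] using hbc.decay ε hε

theorem sub (hu : PeriodicBC N k L u) (hv : PeriodicBC N k L v) (hud : Differentiable ℝ u)
    (hvd : Differentiable ℝ v) : PeriodicBC N k L fun y => u y - v y where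
  per i hi y hy := by simp only [hu.per i hi y hy, hv.per i hi y hy]
  per_deriv i hi y hy := by
    simp only [pd_sub hud hvd, hu.per_deriv i hi y hy, hv.per_deriv i hi y hy]
  decay ε hε := by
    obtain ⟨R₁, hR₁⟩ := hu.decay (ε / 2) (half_pos hε)
    obtain ⟨R₂, hR₂⟩ := hv.decay (ε / 2) (half_pos hε)
    refine ⟨max R₁ R₂, fun y hy hR => ?_⟩
    have h₁ := hR₁ y hy ((le_max_left _ _).trans hR)
    have h₂ := hR₂ y hy ((le_max_right _ _).trans hR)
    calc |u y - v y| ≤ |u y| + |v y| := abs_sub _ _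
      _ < ε := by linarith

theorem eq_zero_of_lap_eq_zero (hbc : PeriodicBC N k L u) (hk : k < N) (hL : 0 < L)
    (hu : ContDiff ℝ 2 u) (hlap : ∀ y ∈ strip N k L, lap u y = 0) :
    ∀ y ∈ strip N k L, u y = 0 := fun y hy =>
  le_antisymm (hbc.nonpos_of_lap_eq_zero hk hL hu hlap y hy) <| neg_nonpos.1 <|
    hbc.neg.nonpos_of_lap_eq_zero hk hL hu.neg (fun y hy => by rw [lap_neg, hlap y hy, neg_zero])
      y hy

end PeriodicBC

section Periodic

variable {N k : ℕ} {L : ℝ} {u : Euc N → ℝ}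

lemma exists_mem_strip_eq_of_periodic (hL : 0 < L)
    (hper : ∀ i : Fin N, (i : ℕ) < k → ∀ y : Euc N, u (y + L • e N i) = u y) (y : Euc N) :
    ∃ z ∈ strip N k L, u z = u y := by
  suffices h : ∀ (s : Finset (Fin N)) (y : Euc N),
      (∀ i : Fin N, (i : ℕ) < k → i ∉ s → |y i| ≤ L / 2) → ∃ z ∈ strip N k L, u z = u y from
    h Finset.univ y (by simp)
  intro s
  induction s using Finset.induction_on with
  | empty => exact fun y hy => ⟨y, fun i hi => hy i hi (Finset.notMem_empty i), rfl⟩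
  | insert a s ha ih =>
    intro y hy
    by_cases hak : (a : ℕ) < k
    · set n := toIcoDiv hL (-(L / 2)) (y a)
      have hu' : u (y + (0 - n • L) • e N a) = u y := by
        simpa using (periodic_line (hper a hak) y).sub_zsmul_eq n (x := 0)
      have hy' : ∀ i : Fin N, (i : ℕ) < k → i ∉ s → |(y + (0 - n • L) • e N a) i| ≤ L / 2 := by
        intro i hi his
        rcases eq_or_ne i a with rfl | hia
        · have := toIcoMod_mem_Ico hL (-(L / 2)) (y i)
          rw [← self_sub_toIcoDiv_zsmul] at this
          rw [add_smul_e_apply_self, abs_le]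
          constructor <;> linarith [this.1, this.2]
        · rw [add_smul_e_apply_of_ne _ _ hia]
          exact hy i hi (by simp [hia, his])
      obtain ⟨z, hz, hzu⟩ := ih _ hy'
      exact ⟨z, hz, hzu.trans hu'⟩
    · refine ih y fun i hi his => hy i hi ?_
      simp only [Finset.mem_insert, not_or]
      exact ⟨fun hia => hak (hia ▸ hi), his⟩

lemma periodicBC_of_periodic
    (hper : ∀ i : Fin N, (i : ℕ) < k → ∀ y : Euc N, u (y + L • e N i) = u y)
    (hdecay : ∀ ε : ℝ, 0 < ε → ∃ R : ℝ, ∀ y : Euc N, R ≤ tailNorm k y → |u y| < ε) :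
    PeriodicBC N k L u where
  per i hi y _ := hper i hi y
  per_deriv i hi y _ := pd_add_of_periodic (hper i hi) i y
  decay ε hε := (hdecay ε hε).imp fun _ hR y _ => hR y

end Periodic

theorem liouville_periodic_and_uniqueness_general
    (N k : ℕ) (hk2 : k < N) (L : ℝ) (hL : 0 < L) :
    (∀ u : Euc N → ℝ, ContDiff ℝ 2 u → (∀ y : Euc N, lap u y = 0) →
      (∃ M : ℝ, ∀ y : Euc N, |u y| ≤ M) →
      (∀ i : Fin N, (i : ℕ) < k → ∀ y : Euc N, u (y + L • e N i) = u y) →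
      (∀ ε : ℝ, 0 < ε → ∃ R : ℝ, ∀ y : Euc N, R ≤ tailNorm k y → |u y| < ε) →
      ∀ y : Euc N, u y = 0) ∧
    (∀ f u₁ u₂ : Euc N → ℝ, ContDiff ℝ 2 u₁ → ContDiff ℝ 2 u₂ →
      (∃ M : ℝ, ∀ y : Euc N, |u₁ y| ≤ M) → (∃ M : ℝ, ∀ y : Euc N, |u₂ y| ≤ M) →
      (∀ y ∈ strip N k L, -lap u₁ y = f y) → (∀ y ∈ strip N k L, -lap u₂ y = f y) →
      PeriodicBC N k L u₁ → PeriodicBC N k L u₂ →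
      ∀ y ∈ strip N k L, u₁ y = u₂ y) := by
  constructor
  · intro u hu hlap _ hper hdecay y
    obtain ⟨z, hz, hzy⟩ := exists_mem_strip_eq_of_periodic hL hper y
    rw [← hzy]
    exact (periodicBC_of_periodic hper hdecay).eq_zero_of_lap_eq_zero hk2 hL hu
      (fun y _ => hlap y) z hz
  · intro f u₁ u₂ hu₁ hu₂ _ _ hf₁ hf₂ hbc₁ hbc₂ y hy
    have hlap : ∀ y ∈ strip N k L, lap (fun w => u₁ w - u₂ w) y = 0 := fun y hy => by
      rw [lap_sub hu₁ hu₂]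
      linarith [hf₁ y hy, hf₂ y hy]
    have hbc := hbc₁.sub hbc₂ (hu₁.differentiable two_ne_zero) (hu₂.differentiable two_ne_zero)
    exact sub_eq_zero.1 (hbc.eq_zero_of_lap_eq_zero hk2 hL (hu₁.sub hu₂) hlap y hy)

/-- Liouville theorem for bounded periodic harmonic functions, and
uniqueness of bounded solutions of the Poisson problem with periodic boundary conditions. -/
theorem liouville_periodic_and_uniqueness
    (N k : ℕ) (hN : 3 ≤ N) (hk1 : 1 ≤ k) (hk2 : k < N) (L : ℝ) (hL : 0 < L) :
    (∀ u : Euc N → ℝ, ContDiff ℝ 2 u → (∀ y : Euc N, lap u y = 0) →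
      (∃ M : ℝ, ∀ y : Euc N, |u y| ≤ M) →
      (∀ i : Fin N, (i : ℕ) < k → ∀ y : Euc N, u (y + L • e N i) = u y) →
      (∀ ε : ℝ, 0 < ε → ∃ R : ℝ, ∀ y : Euc N, R ≤ tailNorm k y → |u y| < ε) →
      ∀ y : Euc N, u y = 0) ∧
    (∀ f u₁ u₂ : Euc N → ℝ, ContDiff ℝ 2 u₁ → ContDiff ℝ 2 u₂ →
      (∃ M : ℝ, ∀ y : Euc N, |u₁ y| ≤ M) → (∃ M : ℝ, ∀ y : Euc N, |u₂ y| ≤ M) →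
      (∀ y ∈ strip N k L, -lap u₁ y = f y) → (∀ y ∈ strip N k L, -lap u₂ y = f y) →
      PeriodicBC N k L u₁ → PeriodicBC N k L u₂ →
      ∀ y ∈ strip N k L, u₁ y = u₂ y) :=
  liouville_periodic_and_uniqueness_general N k hk2 L hL

end PeriodicCriticalSystem
end
end

section
/- Let N ≥ 2, let 1 ≤ k < N be an integer and let τ > k be a real number. Then there exists a constant C > 0, depending only on N, k and τ, such that for every L ≥ 1, every x ∈ B_1(0) ⊂ ℝ^N, and every y = (y',y'') ∈ ℝ^N (y' ∈ ℝ^k, y'' ∈ ℝ^{N-k}), one has Σ_{j=0}^∞ (1+|y-x_j|)^{-τ} ≤ C(1+|y''|)^{k-τ}. -/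
open Real MeasureTheory Filter Topology
open scoped Classical

noncomputable section

namespace PeriodicCriticalSystem

/-! Write `y - x_j = (y - x) + L P_j` and let `m ∈ ℤ^k` be the coordinates of `P_j`. Up to the
factor `(k + 2)^τ`, the `j`-th term is at most `(A + ∑_{i<k} |w_i + L m_i|)^{-τ}` with
`A = 1 + |y''|` and `w = (y - x)'`. The sum of these over `ℤ^k` is `O(A^{k-τ})`: summing out one
coordinate uses the one-dimensional bound `∑_{m ∈ ℤ} (B + |w + L m|)^{-σ} = O(B^{1-σ})` for
`σ > 1` (integral test), and leaves a sum of the same shape in dimension `k - 1` with exponent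
`τ - 1 > k - 1`. -/

section LatticeSums

open Finset

theorem rpow_neg_le_mul_rpow_neg_of_le_mul {a b c σ : ℝ} (ha : 0 < a) (hc : 0 < c) (hσ : 0 ≤ σ)
    (h : a ≤ c * b) : b ^ (-σ) ≤ c ^ σ * a ^ (-σ) := by
  calc b ^ (-σ) ≤ (a / c) ^ (-σ) :=
        rpow_le_rpow_of_nonpos (by positivity) ((div_le_iff₀' hc).2 h) (by linarith)
    _ = c ^ σ * a ^ (-σ) := by
        rw [div_rpow ha.le hc.le, rpow_neg hc.le, div_inv_eq_mul, mul_comm]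

/-- Integral test: the sum is at most `B^{-σ} + ∫_B^∞ t^{-σ} dt = B^{-σ} + B^{1-σ} / (σ - 1)`. -/
theorem sum_rpow_neg_add_natCast_le {σ B : ℝ} (hσ : 1 < σ) (hB : 1 ≤ B) (s : Finset ℕ) :
    ∑ q ∈ s, (B + q) ^ (-σ) ≤ σ / (σ - 1) * B ^ (1 - σ) := by
  obtain ⟨n, hn⟩ : ∃ n, s ⊆ range (n + 1) :=
    ⟨s.sup id, fun q hq => mem_range.2 (Nat.lt_succ_of_le (le_sup (f := id) hq))⟩
  have hanti : AntitoneOn (fun t : ℝ => t ^ (-σ)) (Set.Icc B (B + n)) :=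
    fun a ha b _ hab => rpow_le_rpow_of_nonpos (by linarith [ha.1]) hab (by linarith)
  have hint : ∫ t in B..B + n, t ^ (-σ) ≤ B ^ (1 - σ) / (σ - 1) := by
    have h0 : (0 : ℝ) ∉ Set.uIcc B (B + n) := by
      rw [Set.uIcc_of_le (by simp)]
      exact fun h => by linarith [h.1]
    rw [integral_rpow (Or.inr ⟨by linarith, h0⟩), neg_add_eq_sub, ← neg_div_neg_eq, neg_sub,
      neg_sub]
    gcongr
    exact sub_le_self _ (by positivity)
  calc ∑ q ∈ s, (B + q) ^ (-σ) ≤ ∑ q ∈ range (n + 1), (B + q) ^ (-σ) :=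
        sum_le_sum_of_subset_of_nonneg hn fun _ _ _ => by positivity
    _ = B ^ (-σ) + ∑ i ∈ range n, (B + ↑(i + 1)) ^ (-σ) := by
        rw [sum_range_succ', add_comm]; simp
    _ ≤ B ^ (1 - σ) + B ^ (1 - σ) / (σ - 1) :=
        add_le_add (rpow_le_rpow_of_exponent_le hB (by linarith))
          (hanti.sum_le_integral.trans hint)
    _ = σ / (σ - 1) * B ^ (1 - σ) := by
        field_simp [show σ - 1 ≠ 0 by linarith]; ring

theorem sum_comp_natAbs_sub_le {f : ℕ → ℝ} (hf : ∀ n, 0 ≤ f n) (S : Finset ℤ) (c : ℤ) :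
    ∑ m ∈ S, f (m - c).natAbs ≤ 2 * ∑ n ∈ S.image fun m => (m - c).natAbs, f n := by
  rw [sum_comp, mul_sum]
  gcongr with n
  rw [nsmul_eq_mul]
  have hfiber : {m ∈ S | (m - c).natAbs = n} ⊆ {c + n, c - n} := by
    intro m hm
    simp only [mem_filter, mem_insert, mem_singleton] at hm ⊢
    omega
  gcongr
  · exact hf n
  · exact_mod_cast (card_le_card hfiber).trans card_le_two

/-- With `c` the integer nearest to `-w / L`, `B + |w + L m| ≥ (B + |m - c|) / 2`, and each value
of `|m - c|` is taken at most twice. -/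
theorem sum_rpow_neg_add_abs_le {σ B L : ℝ} (hσ : 1 < σ) (hB : 1 ≤ B) (hL : 1 ≤ L) (w : ℝ)
    (S : Finset ℤ) :
    ∑ m ∈ S, (B + |w + L * m|) ^ (-σ) ≤ 2 ^ (σ + 1) * (σ / (σ - 1)) * B ^ (1 - σ) := by
  set c := round (-w / L)
  have hterm : ∀ m : ℤ, (B + |w + L * m|) ^ (-σ) ≤ 2 ^ σ * (B + (m - c).natAbs) ^ (-σ) := by
    intro m
    have hdist : ((m - c).natAbs : ℝ) - 1 / 2 ≤ |w + L * m| := by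
      have hw : w + L * m = L * (m - -w / L) := by field_simp; ring
      have hc : |(m : ℝ) - c| ≤ |m - -w / L| + |-w / L - c| := abs_sub_le _ _ _
      rw [hw, abs_mul, abs_of_pos (by linarith), Nat.cast_natAbs, Int.cast_abs, Int.cast_sub]
      nlinarith [abs_sub_round (-w / L), abs_nonneg ((m : ℝ) - -w / L)]
    exact rpow_neg_le_mul_rpow_neg_of_le_mul (by positivity) two_pos (by linarith)
      (by linarith)
  calc ∑ m ∈ S, (B + |w + L * m|) ^ (-σ)
      ≤ ∑ m ∈ S, 2 ^ σ * (B + (m - c).natAbs) ^ (-σ) := sum_le_sum fun m _ => hterm m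
    _ = 2 ^ σ * ∑ m ∈ S, (B + (m - c).natAbs) ^ (-σ) := (mul_sum _ _ _).symm
    _ ≤ 2 ^ σ * (2 * (σ / (σ - 1) * B ^ (1 - σ))) := by
        gcongr
        refine (sum_comp_natAbs_sub_le (f := fun n : ℕ => (B + n) ^ (-σ)) (fun n => by positivity)
          S c).trans ?_
        gcongr
        exact sum_rpow_neg_add_natCast_le hσ hB _
    _ = 2 ^ (σ + 1) * (σ / (σ - 1)) * B ^ (1 - σ) := by
        rw [rpow_add_one two_ne_zero]; ring

/-- Summing out one coordinate at a time lowers both the dimension and the exponent by one. -/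
theorem exists_sum_lattice_rpow_neg_le (k : ℕ) {τ : ℝ} (hτ : k < τ) :
    ∃ C : ℝ, 0 < C ∧ ∀ A L : ℝ, 1 ≤ A → 1 ≤ L → ∀ (w : Fin k → ℝ) (S : Finset (Fin k → ℤ)),
      ∑ m ∈ S, (A + ∑ i, |w i + L * m i|) ^ (-τ) ≤ C * A ^ (k - τ) := by
  induction k generalizing τ with
  | zero =>
    refine ⟨1, one_pos, fun A L hA _ w S => ?_⟩
    calc ∑ m ∈ S, (A + ∑ i, |w i + L * m i|) ^ (-τ)
        ≤ ∑ m ∈ (univ : Finset (Fin 0 → ℤ)), (A + ∑ i, |w i + L * m i|) ^ (-τ) :=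
          sum_le_sum_of_subset_of_nonneg (subset_univ S) fun _ _ _ => by positivity
      _ = 1 * A ^ (((0 : ℕ) : ℝ) - τ) := by simp
  | succ k ih =>
    have hτ1 : 1 < τ := by push_cast at hτ; linarith [(k.cast_nonneg : (0 : ℝ) ≤ k)]
    obtain ⟨C, hC, hsum⟩ := ih (τ := τ - 1) (by push_cast at hτ; linarith)
    refine ⟨2 ^ (τ + 1) * (τ / (τ - 1)) * C, by positivity, fun A L hA hL w S => ?_⟩
    set S₀ := S.image fun m => m 0
    set S' := S.image Fin.tail
    have hsplit : ∀ (b : ℤ) (a : Fin k → ℤ), ∑ i, |w i + L * (Fin.cons b a : Fin (k + 1) → ℤ) i| =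
        |w 0 + L * b| + ∑ i, |w i.succ + L * a i| := by
      intro b a
      simp [Fin.sum_univ_succ]
    calc ∑ m ∈ S, (A + ∑ i, |w i + L * m i|) ^ (-τ)
        ≤ ∑ m ∈ (S₀ ×ˢ S').image (fun p => (Fin.cons p.1 p.2 : Fin (k + 1) → ℤ)),
            (A + ∑ i, |w i + L * m i|) ^ (-τ) := by
          refine sum_le_sum_of_subset_of_nonneg (fun m hm => ?_) fun _ _ _ => by positivity
          exact mem_image.2 ⟨(m 0, Fin.tail m),
            mem_product.2 ⟨mem_image_of_mem _ hm, mem_image_of_mem _ hm⟩, Fin.cons_self_tail m⟩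
      _ = ∑ a ∈ S', ∑ b ∈ S₀, ((A + ∑ i, |w i.succ + L * a i|) + |w 0 + L * b|) ^ (-τ) := by
          rw [sum_image fun p _ q _ h => Prod.ext_iff.2 (Fin.cons_injective2 h),
            sum_product_right]
          simp_rw [hsplit, add_comm |w 0 + _|, add_assoc]
      _ ≤ ∑ a ∈ S', 2 ^ (τ + 1) * (τ / (τ - 1)) *
            (A + ∑ i, |w i.succ + L * a i|) ^ (-(τ - 1)) := by
          gcongr with a
          rw [neg_sub]
          exact sum_rpow_neg_add_abs_le hτ1
            (le_add_of_le_of_nonneg hA (sum_nonneg fun _ _ => abs_nonneg _)) hL _ _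
      _ ≤ 2 ^ (τ + 1) * (τ / (τ - 1)) * (C * A ^ (k - (τ - 1))) := by
          rw [← mul_sum]
          gcongr
          exact hsum A L hA hL _ S'
      _ = 2 ^ (τ + 1) * (τ / (τ - 1)) * C * A ^ ((k + 1 : ℕ) - τ) := by
          push_cast; ring_nf

end LatticeSums

def tailPart {N : ℕ} (k : ℕ) : Euc N →ₗ[ℝ] Euc N where
  toFun y := WithLp.toLp 2 fun i => if k ≤ (i : ℕ) then y i else 0
  map_add' a b := by ext i; simp only [PiLp.add_apply]; split_ifs <;> simp
  map_smul' c a := by ext i; simp only [PiLp.smul_apply]; split_ifs <;> simp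

theorem tailPart_apply {N : ℕ} (k : ℕ) (y : Euc N) (i : Fin N) :
    tailPart k y i = if k ≤ (i : ℕ) then y i else 0 := rfl

section Lattice

variable {N k : ℕ}

theorem tailNorm_eq_norm_tailPart (y : Euc N) : tailNorm k y = ‖tailPart k y‖ := by
  rw [tailNorm, EuclideanSpace.norm_eq]
  congr 1
  refine Finset.sum_congr rfl fun i _ => ?_
  rw [tailPart_apply]
  split_ifs <;> simp [sq_abs]

theorem norm_tailPart_le (y : Euc N) : ‖tailPart k y‖ ≤ ‖y‖ := by
  rw [EuclideanSpace.norm_eq, EuclideanSpace.norm_eq]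
  gcongr with i
  rw [tailPart_apply]
  split_ifs <;> simp

theorem tailPart_eq_zero_of_mem_Qlat {p : Euc N} (hp : p ∈ Qlat N k) : tailPart k p = 0 := by
  ext i
  rw [tailPart_apply]
  split_ifs with h <;> simp [hp.2 i, h]

theorem tailNorm_nonneg (y : Euc N) : 0 ≤ tailNorm k y := Real.sqrt_nonneg _

/-- The translates `x - L p` all have the tail of `x`. -/
theorem tailNorm_le_norm_sub_add_norm {p : Euc N} (hp : p ∈ Qlat N k) (L : ℝ) (x y : Euc N) :
    tailNorm k y ≤ ‖y - (x - L • p)‖ + ‖x‖ := by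
  have hy : tailPart k y = tailPart k (y - (x - L • p)) + tailPart k x := by
    rw [map_sub, map_sub, map_smul, tailPart_eq_zero_of_mem_Qlat hp, smul_zero,
      sub_zero, sub_add_cancel]
  rw [tailNorm_eq_norm_tailPart, hy]
  exact (norm_add_le _ _).trans (add_le_add (norm_tailPart_le _) (norm_tailPart_le _))

def latticeCoord (hkN : k ≤ N) (p : Euc N) (i : Fin k) : ℤ := ⌊p (Fin.castLE hkN i)⌋

theorem latticeCoord_spec (hkN : k ≤ N) {p : Euc N} (hp : p ∈ Qlat N k) (i : Fin k) :
    p (Fin.castLE hkN i) = latticeCoord hkN p i := by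
  obtain ⟨m, hm⟩ := hp.1 (Fin.castLE hkN i)
  simp [latticeCoord, hm]

theorem injOn_latticeCoord (hkN : k ≤ N) : Set.InjOn (latticeCoord hkN) (Qlat N k) := by
  intro p hp q hq h
  ext i
  by_cases hik : (i : ℕ) < k
  · have hi : Fin.castLE hkN ⟨i, hik⟩ = i := rfl
    rw [← hi, latticeCoord_spec hkN hp, latticeCoord_spec hkN hq, h]
  · rw [hp.2 i (not_lt.1 hik), hq.2 i (not_lt.1 hik)]

/-- For `v = y - (x - L p)`: `1 + |y''| ≤ 2 + |v|` and `∑_{i<k} |v_i| ≤ k |v|`, whence the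
factor `k + 2`. -/
theorem one_add_norm_sub_rpow_neg_le (hkN : k ≤ N) {τ : ℝ} (hτ : 0 ≤ τ) {p : Euc N}
    (hp : p ∈ Qlat N k) (L : ℝ) {x : Euc N} (hx : ‖x‖ ≤ 1) (y : Euc N) :
    (1 + ‖y - (x - L • p)‖) ^ (-τ) ≤
      ((k : ℝ) + 2) ^ τ * (1 + tailNorm k y +
        ∑ i, |(y - x) (Fin.castLE hkN i) + L * latticeCoord hkN p i|) ^ (-τ) := by
  set v := y - (x - L • p)
  have hcoord : ∀ i,
      (y - x) (Fin.castLE hkN i) + L * latticeCoord hkN p i = v (Fin.castLE hkN i) := by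
    intro i
    simp only [v, PiLp.sub_apply, PiLp.smul_apply, smul_eq_mul, ← latticeCoord_spec hkN hp]
    ring
  have hsum : ∑ i, |v (Fin.castLE hkN i)| ≤ k * ‖v‖ := by
    simpa using Finset.sum_le_sum fun i (_ : i ∈ Finset.univ) =>
      PiLp.norm_apply_le v (Fin.castLE hkN i)
  have htail := tailNorm_le_norm_sub_add_norm hp L x y
  simp_rw [hcoord]
  refine rpow_neg_le_mul_rpow_neg_of_le_mul (by positivity [tailNorm_nonneg (k := k) y])
    (by positivity) hτ ?_
  nlinarith [norm_nonneg v]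

end Lattice

theorem lattice_sum_bound_general
    (N k : ℕ) (hk2 : k < N)
    (τ : ℝ) (hτ : (k : ℝ) < τ)
    (P : ℕ → Euc N) (hP : LatticeEnum N k P) :
    ∃ C : ℝ, 0 < C ∧ ∀ L : ℝ, 1 ≤ L → ∀ x ∈ Metric.ball (0 : Euc N) 1, ∀ y : Euc N,
      (∑' j : ℕ, (1 + ‖y - xc L P x j‖) ^ (-τ)) ≤
        C * (1 + tailNorm k y) ^ ((k : ℝ) - τ) := by
  obtain ⟨C, hC, hsum⟩ := exists_sum_lattice_rpow_neg_le k hτ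
  refine ⟨((k : ℝ) + 2) ^ τ * C, by positivity, fun L hL x hx y => ?_⟩
  have hPQ : ∀ j, P j ∈ Qlat N k := fun j => hP.2.1 ▸ Set.mem_range_self j
  set φ := fun j => latticeCoord hk2.le (P j)
  have hφ : Function.Injective φ := fun i j h =>
    hP.1 (injOn_latticeCoord hk2.le (hPQ i) (hPQ j) h)
  have hx1 : ‖x‖ ≤ 1 := (mem_ball_zero_iff.1 hx).le
  have hτ0 : 0 ≤ τ := (k.cast_nonneg).trans hτ.le
  refine tsum_le_of_sum_le' (by positivity [tailNorm_nonneg (k := k) y]) fun s => ?_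
  calc ∑ j ∈ s, (1 + ‖y - xc L P x j‖) ^ (-τ)
      ≤ ∑ j ∈ s, ((k : ℝ) + 2) ^ τ *
          (1 + tailNorm k y + ∑ i, |(y - x) (Fin.castLE hk2.le i) + L * φ j i|) ^ (-τ) :=
        Finset.sum_le_sum fun j _ => one_add_norm_sub_rpow_neg_le hk2.le hτ0 (hPQ j) L hx1 y
    _ = ((k : ℝ) + 2) ^ τ * ∑ m ∈ s.image φ,
          (1 + tailNorm k y + ∑ i, |(y - x) (Fin.castLE hk2.le i) + L * m i|) ^ (-τ) := by
        rw [Finset.sum_image hφ.injOn, Finset.mul_sum]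
    _ ≤ ((k : ℝ) + 2) ^ τ * C * (1 + tailNorm k y) ^ ((k : ℝ) - τ) := by
        rw [mul_assoc]
        gcongr
        exact hsum _ L (le_add_of_nonneg_right (tailNorm_nonneg y)) hL _ _

/-- uniform bound for the lattice sum `Σ_j (1+|y-x_j|)^{-τ}`. -/
theorem lattice_sum_bound
    (N k : ℕ) (hN : 2 ≤ N) (hk1 : 1 ≤ k) (hk2 : k < N)
    (τ : ℝ) (hτ : (k : ℝ) < τ)
    (P : ℕ → Euc N) (hP : LatticeEnum N k P) :
    ∃ C : ℝ, 0 < C ∧ ∀ L : ℝ, 1 ≤ L → ∀ x ∈ Metric.ball (0 : Euc N) 1, ∀ y : Euc N,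
      (∑' j : ℕ, (1 + ‖y - xc L P x j‖) ^ (-τ)) ≤
        C * (1 + tailNorm k y) ^ ((k : ℝ) - τ) :=
  lattice_sum_bound_general N k hk2 τ hτ P hP

end PeriodicCriticalSystem
end
end

section
/- There exist positive constants C_{1,κ} and C_{2,κ} such that for all y ∈ Ω, 0 ≤ PU_{x,μ}(y) ≤ C_{1,κ} Σ_{j=0}^∞ U_{x_j,μ}(y) and 0 ≤ PV_{x,μ}(y) ≤ C_{2,κ} Σ_{j=0}^∞ V_{x_j,μ}(y). -/
open Real MeasureTheory Filter Topology
open scoped Classical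

noncomputable section

/-!
Both coupling nonlinearities are constant multiples of `W_{x,μ}^{2*-1}`, so `PU` and `PV` are
constant multiples of `∫_Ω G(y,z) W_{x,μ}(z)^{2*-1} dz`. Unfolding the periodic Green's function
and enlarging `Ω` to `ℝ^N` bounds this by `Σ_j ∫ Γ(y + L P_j, z) W_{x,μ}(z)^{2*-1} dz`, and each
term is a Newtonian potential of the bubble, at most `C W_{x,μ}(y + L P_j) = C W_{x_j,μ}(y)`.
After rescaling to `μ = 1` this is the estimate `∫ |a-z|^{-α} (1+|z|)^{-β} dz ≲ (1+|a|)^{-α}`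
for `0 ≤ α < N < β`: on the ball of radius `(1+|a|)/2` around `a` the weight is comparable to its
value at `a`, and off it the kernel is. The resulting series converges since `W` decays like
`|y|^{2-N}` and `N - 2` exceeds the rank `k` of the lattice `Q_k`.
-/

open Metric ENNReal Module

section Splitting

variable {E : Type*} [NormedAddCommGroup E] [MeasurableSpace E] [OpensMeasurableSpace E]
  (ν : Measure E)

theorem setLIntegral_ball_norm_sub_rpow_mul_one_add_norm_rpow_le {α β : ℝ} (hβ : 0 ≤ β)
    (a : E) {r : ℝ} (hr : 0 < r) (hra : 2 * r ≤ 1 + ‖a‖) :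
    ∫⁻ z in ball a r, ENNReal.ofReal (‖a - z‖ ^ (-α) * (1 + ‖z‖) ^ (-β)) ∂ν ≤
      ENNReal.ofReal (r ^ (-β)) * ∫⁻ z in ball a r, ENNReal.ofReal (‖a - z‖ ^ (-α)) ∂ν := by
  rw [← lintegral_const_mul' _ _ ofReal_ne_top]
  refine setLIntegral_mono' measurableSet_ball fun z hz => ?_
  have hz : ‖a - z‖ < r := by rw [← dist_eq_norm]; exact mem_ball'.1 hz
  rw [← ENNReal.ofReal_mul (by positivity), mul_comm]
  refine ENNReal.ofReal_le_ofReal (mul_le_mul_of_nonneg_right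
    (Real.rpow_le_rpow_of_nonpos hr ?_ (by linarith)) (by positivity))
  linarith [norm_sub_norm_le a z]

theorem setLIntegral_compl_ball_norm_sub_rpow_mul_one_add_norm_rpow_le {α β : ℝ} (hα : 0 ≤ α)
    (a : E) {r : ℝ} (hr : 0 < r) :
    ∫⁻ z in (ball a r)ᶜ, ENNReal.ofReal (‖a - z‖ ^ (-α) * (1 + ‖z‖) ^ (-β)) ∂ν ≤
      ENNReal.ofReal (r ^ (-α)) * ∫⁻ z, ENNReal.ofReal ((1 + ‖z‖) ^ (-β)) ∂ν := by
  rw [← lintegral_const_mul' _ _ ofReal_ne_top]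
  refine (setLIntegral_mono' measurableSet_ball.compl fun z hz => ?_).trans
    (setLIntegral_le_lintegral _ _)
  have hz : r ≤ ‖a - z‖ := by rw [← dist_eq_norm]; exact not_lt.1 (mt mem_ball'.2 hz)
  rw [← ENNReal.ofReal_mul (by positivity)]
  exact ENNReal.ofReal_le_ofReal (mul_le_mul_of_nonneg_right
    (Real.rpow_le_rpow_of_nonpos hr hz (by linarith)) (by positivity))

end Splitting

section RieszPotential

variable {E : Type*} [NormedAddCommGroup E] [NormedSpace ℝ E] [FiniteDimensional ℝ E]
  [MeasurableSpace E] [BorelSpace E] (ν : Measure E) [ν.IsAddHaarMeasure]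

theorem lintegral_eq_ofReal_pow_mul_lintegral_comp_add_smul (g : E → ℝ≥0∞) (a : E) {R : ℝ}
    (hR : 0 < R) :
    ∫⁻ z, g z ∂ν = ENNReal.ofReal (R ^ finrank ℝ E) * ∫⁻ w, g (a + R • w) ∂ν := by
  have hmap : ∫⁻ w, g (a + R • w) ∂ν = ENNReal.ofReal (R ^ finrank ℝ E)⁻¹ * ∫⁻ z, g z ∂ν := by
    calc ∫⁻ w, g (a + R • w) ∂ν = ∫⁻ w, g (a + w) ∂(Measure.map (R • ·) ν) :=
          (lintegral_map_equiv (fun w => g (a + w))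
            (Homeomorph.smul (isUnit_iff_ne_zero.2 hR.ne').unit).toMeasurableEquiv).symm
      _ = _ := by
          rw [Measure.map_addHaar_smul ν hR.ne', lintegral_smul_measure,
            lintegral_add_left_eq_self g a, abs_of_pos (inv_pos.2 (pow_pos hR _)), smul_eq_mul]
  rw [hmap, ← mul_assoc, ← ENNReal.ofReal_mul (by positivity),
    mul_inv_cancel₀ (pow_pos hR _).ne', ENNReal.ofReal_one, one_mul]

theorem lintegral_ball_norm_sub_rpow_neg_eq (α : ℝ) (a : E) {r : ℝ} (hr : 0 < r) :
    ∫⁻ z in ball a r, ENNReal.ofReal (‖a - z‖ ^ (-α)) ∂ν =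
      ENNReal.ofReal (r ^ ((finrank ℝ E : ℝ) - α)) *
        ∫⁻ w in ball 0 1, ENNReal.ofReal (‖w‖ ^ (-α)) ∂ν := by
  have hpt : ∀ w : E, (ball a r).indicator (fun z => ENNReal.ofReal (‖a - z‖ ^ (-α))) (a + r • w) =
      ENNReal.ofReal (r ^ (-α)) *
        (ball 0 1).indicator (fun w => ENNReal.ofReal (‖w‖ ^ (-α))) w := by
    intro w
    have hmem : a + r • w ∈ ball a r ↔ w ∈ ball (0 : E) 1 := by
      simp [mem_ball, dist_eq_norm, norm_smul, abs_of_pos hr, hr]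
    by_cases hw : w ∈ ball (0 : E) 1
    · rw [Set.indicator_of_mem (hmem.2 hw), Set.indicator_of_mem hw, ← ENNReal.ofReal_mul
        (by positivity), sub_add_cancel_left, norm_neg, norm_smul, Real.norm_of_nonneg hr.le,
        Real.mul_rpow hr.le (norm_nonneg w)]
    · rw [Set.indicator_of_notMem (mt hmem.1 hw), Set.indicator_of_notMem hw, mul_zero]
  rw [← lintegral_indicator measurableSet_ball,
    lintegral_eq_ofReal_pow_mul_lintegral_comp_add_smul ν _ a hr, lintegral_congr hpt,
    lintegral_const_mul' _ _ ENNReal.ofReal_ne_top, lintegral_indicator measurableSet_ball,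
    ← mul_assoc, ← ENNReal.ofReal_mul (by positivity), ← Real.rpow_natCast,
    ← Real.rpow_add hr, sub_eq_add_neg]

theorem lintegral_ball_zero_one_norm_rpow_neg_lt_top [Nontrivial E] {α : ℝ}
    (hα : α < finrank ℝ E) :
    ∫⁻ w in ball 0 1, ENNReal.ofReal (‖w‖ ^ (-α)) ∂ν < ⊤ :=
  IntegrableOn.setLIntegral_lt_top <| integrableOn_ball_of_norm_le_rpow finrank_pos hα
    (ae_of_all _ fun w => by rw [one_mul, Real.norm_of_nonneg (by positivity)])
    (measurable_norm.pow_const _).aestronglyMeasurable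

theorem exists_lintegral_norm_sub_rpow_mul_one_add_norm_rpow_le [Nontrivial E] {α β : ℝ}
    (hα0 : 0 ≤ α) (hα : α < finrank ℝ E) (hβ : (finrank ℝ E : ℝ) < β) :
    ∃ C : ℝ, 0 < C ∧ ∀ a : E,
      ∫⁻ z, ENNReal.ofReal (‖a - z‖ ^ (-α) * (1 + ‖z‖) ^ (-β)) ∂ν ≤
        ENNReal.ofReal (C * (1 + ‖a‖) ^ (-α)) := by
  set d : ℝ := (finrank ℝ E : ℝ)
  obtain ⟨J, hJ0, hJ⟩ : ∃ J : ℝ, 0 ≤ J ∧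
      ∫⁻ w in ball 0 1, ENNReal.ofReal (‖w‖ ^ (-α)) ∂ν = ENNReal.ofReal J :=
    ⟨_, toReal_nonneg, (ofReal_toReal (lintegral_ball_zero_one_norm_rpow_neg_lt_top ν hα).ne).symm⟩
  obtain ⟨I, hI0, hI⟩ : ∃ I : ℝ, 0 ≤ I ∧
      ∫⁻ z, ENNReal.ofReal ((1 + ‖z‖) ^ (-β)) ∂ν = ENNReal.ofReal I :=
    ⟨_, toReal_nonneg, (ofReal_toReal (finite_integral_one_add_norm hβ).ne).symm⟩
  refine ⟨2 ^ α * (2 ^ (β - d) * J + I + 1), by positivity, fun a => ?_⟩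
  set r := (1 + ‖a‖) / 2
  have hr : 0 < r := by positivity
  have hr_def : 2 * r = 1 + ‖a‖ := by ring
  have hr_pow : r ^ (d - β) ≤ 2 ^ (β - d) := by
    calc r ^ (d - β) ≤ (1 / 2) ^ (d - β) :=
          Real.rpow_le_rpow_of_nonpos (by norm_num) (by linarith [norm_nonneg a]) (by linarith)
      _ = 2 ^ (β - d) := by
          rw [one_div, Real.inv_rpow (by norm_num), ← Real.rpow_neg (by norm_num), neg_sub]
  have hr_α : r ^ (-α) = 2 ^ α * (1 + ‖a‖) ^ (-α) := by
    rw [Real.div_rpow (by positivity) (by norm_num), Real.rpow_neg (by norm_num : (0:ℝ) ≤ 2)]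
    field_simp
  calc ∫⁻ z, ENNReal.ofReal (‖a - z‖ ^ (-α) * (1 + ‖z‖) ^ (-β)) ∂ν
      = (∫⁻ z in ball a r, ENNReal.ofReal (‖a - z‖ ^ (-α) * (1 + ‖z‖) ^ (-β)) ∂ν) +
          ∫⁻ z in (ball a r)ᶜ, ENNReal.ofReal (‖a - z‖ ^ (-α) * (1 + ‖z‖) ^ (-β)) ∂ν :=
        (lintegral_add_compl _ measurableSet_ball).symm
    _ ≤ ENNReal.ofReal (r ^ (-β)) * (ENNReal.ofReal (r ^ (d - α)) * ENNReal.ofReal J) +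
          ENNReal.ofReal (r ^ (-α)) * ENNReal.ofReal I := by
        rw [← hJ, ← hI, ← lintegral_ball_norm_sub_rpow_neg_eq ν α a hr]
        exact add_le_add
          (setLIntegral_ball_norm_sub_rpow_mul_one_add_norm_rpow_le ν (by linarith) a hr hr_def.le)
          (setLIntegral_compl_ball_norm_sub_rpow_mul_one_add_norm_rpow_le ν hα0 a hr)
    _ = ENNReal.ofReal (r ^ (-α) * (r ^ (d - β) * J + I)) := by
        rw [← ENNReal.ofReal_mul (by positivity), ← ENNReal.ofReal_mul (by positivity),
          ← ENNReal.ofReal_mul (by positivity), ← ENNReal.ofReal_add (by positivity)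
          (by positivity), ← mul_assoc, ← Real.rpow_add hr]
        congr 1
        rw [show -β + (d - α) = -α + (d - β) by ring, Real.rpow_add hr]
        ring
    _ ≤ ENNReal.ofReal (2 ^ α * (2 ^ (β - d) * J + I + 1) * (1 + ‖a‖) ^ (-α)) := by
        refine ENNReal.ofReal_le_ofReal ?_
        rw [hr_α, mul_right_comm]
        exact mul_le_mul_of_nonneg_right (mul_le_mul_of_nonneg_left
          (by linarith [mul_le_mul_of_nonneg_right hr_pow hJ0]) (by positivity)) (by positivity)

theorem exists_lintegral_norm_sub_rpow_mul_one_add_mul_norm_rpow_le [Nontrivial E] {α β : ℝ}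
    (hα0 : 0 ≤ α) (hα : α < finrank ℝ E) (hβ : (finrank ℝ E : ℝ) < β) :
    ∃ C : ℝ, 0 < C ∧ ∀ (a x : E) {μ : ℝ}, 0 < μ →
      ∫⁻ z, ENNReal.ofReal (‖a - z‖ ^ (-α) * (1 + μ * ‖z - x‖) ^ (-β)) ∂ν ≤
        ENNReal.ofReal (C * μ ^ (α - finrank ℝ E) * (1 + μ * ‖a - x‖) ^ (-α)) := by
  obtain ⟨C, hC, hunit⟩ := exists_lintegral_norm_sub_rpow_mul_one_add_norm_rpow_le ν hα0 hα hβ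
  refine ⟨C, hC, fun a x μ hμ => ?_⟩
  -- Substitute `z = x + μ⁻¹ • w`.
  have hpt : ∀ w : E, ENNReal.ofReal (‖a - (x + μ⁻¹ • w)‖ ^ (-α) *
      (1 + μ * ‖x + μ⁻¹ • w - x‖) ^ (-β)) = ENNReal.ofReal (μ ^ α) *
        ENNReal.ofReal (‖μ • (a - x) - w‖ ^ (-α) * (1 + ‖w‖) ^ (-β)) := by
    intro w
    have hsub : a - (x + μ⁻¹ • w) = μ⁻¹ • (μ • (a - x) - w) := by
      rw [smul_sub, inv_smul_smul₀ hμ.ne']; abel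
    rw [← ENNReal.ofReal_mul (by positivity), hsub, add_sub_cancel_left, norm_smul, norm_smul,
      Real.norm_of_nonneg (inv_nonneg.2 hμ.le), mul_inv_cancel_left₀ hμ.ne',
      Real.mul_rpow (inv_nonneg.2 hμ.le) (norm_nonneg _), Real.inv_rpow hμ.le,
      ← Real.rpow_neg hμ.le, neg_neg, mul_assoc]
  rw [lintegral_eq_ofReal_pow_mul_lintegral_comp_add_smul ν _ x (inv_pos.2 hμ),
    lintegral_congr hpt, lintegral_const_mul' _ _ ofReal_ne_top]
  calc ENNReal.ofReal (μ⁻¹ ^ finrank ℝ E) * (ENNReal.ofReal (μ ^ α) *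
        ∫⁻ w, ENNReal.ofReal (‖μ • (a - x) - w‖ ^ (-α) * (1 + ‖w‖) ^ (-β)) ∂ν)
      ≤ ENNReal.ofReal (μ⁻¹ ^ finrank ℝ E) * (ENNReal.ofReal (μ ^ α) *
          ENNReal.ofReal (C * (1 + ‖μ • (a - x)‖) ^ (-α))) := by gcongr; exact hunit _
    _ = _ := by
        rw [← ENNReal.ofReal_mul (by positivity), ← ENNReal.ofReal_mul (by positivity), norm_smul,
          Real.norm_of_nonneg hμ.le, inv_pow, ← Real.rpow_natCast, ← Real.rpow_neg hμ.le,
          ← mul_assoc, ← Real.rpow_add hμ, neg_add_eq_sub]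
        ring_nf

end RieszPotential

theorem summable_one_add_abs_int_rpow_neg {q : ℝ} (hq : 1 < q) :
    Summable fun m : ℤ => (1 + |(m : ℝ)|) ^ (-q) := by
  refine (summable_abs_int_rpow hq).of_norm_bounded_eventually ?_
  filter_upwards [eventually_cofinite_ne 0] with m hm
  rw [Real.norm_of_nonneg (by positivity)]
  exact Real.rpow_le_rpow_of_nonpos (by positivity) (by linarith) (by linarith)

theorem summable_fin_pi_prod {α : Type*} {f : α → ℝ} (hf0 : ∀ a, 0 ≤ f a) (hf : Summable f) :
    ∀ n : ℕ, Summable fun m : Fin n → α => ∏ i, f (m i)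
  | 0 => .of_finite
  | n + 1 => by
    rw [← (Fin.consEquiv fun _ => α).summable_iff]
    refine ((hf.mul_of_nonneg (summable_fin_pi_prod hf0 hf n) hf0
      fun m => Finset.prod_nonneg fun i _ => hf0 (m i))).congr fun p => ?_
    simp [Fin.prod_univ_succ]

section NormedSpace

variable {E : Type*} [NormedAddCommGroup E] [NormedSpace ℝ E]

theorem one_add_norm_le_mul_one_add_norm_add_smul (v w : E) {L : ℝ} (hL : 0 < L) :
    1 + ‖w‖ ≤ (1 + (‖v‖ + 1) / L) * (1 + ‖v + L • w‖) := by
  have htri : L * ‖w‖ ≤ ‖v + L • w‖ + ‖v‖ := by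
    simpa [norm_smul, abs_of_pos hL, add_comm] using norm_le_add_norm_add (L • w) v
  have hnum : ‖v + L • w‖ + ‖v‖ ≤ (‖v‖ + 1) * (1 + ‖v + L • w‖) := by
    nlinarith [norm_nonneg v, norm_nonneg (v + L • w)]
  calc 1 + ‖w‖ ≤ 1 + (‖v + L • w‖ + ‖v‖) / L := by
        gcongr; rw [le_div_iff₀ hL]; linarith
    _ ≤ (1 + ‖v + L • w‖) + (‖v‖ + 1) * (1 + ‖v + L • w‖) / L := by
        gcongr; linarith [norm_nonneg (v + L • w)]
    _ = _ := by ring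

theorem Summable.one_add_norm_add_smul_rpow_neg {ι : Type*} {P : ι → E} {r : ℝ}
    (h : Summable fun j => (1 + ‖P j‖) ^ (-r)) (hr : 0 ≤ r) (v : E) {L : ℝ} (hL : 0 < L) :
    Summable fun j => (1 + ‖v + L • P j‖) ^ (-r) := by
  set M := 1 + (‖v‖ + 1) / L
  refine (h.mul_left (M ^ r)).of_nonneg_of_le (fun j => by positivity) fun j => ?_
  calc (1 + ‖v + L • P j‖) ^ (-r) ≤ ((1 + ‖P j‖) / M) ^ (-r) :=
        Real.rpow_le_rpow_of_nonpos (by positivity)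
          (div_le_of_le_mul₀ (by positivity) (by positivity)
            (by rw [mul_comm]; exact one_add_norm_le_mul_one_add_norm_add_smul v (P j) hL))
          (by linarith)
    _ = M ^ r * (1 + ‖P j‖) ^ (-r) := by
        rw [Real.div_rpow (by positivity) (by positivity), Real.rpow_neg (by positivity) r,
          Real.rpow_neg (by positivity) r]
        field_simp

end NormedSpace

theorem one_add_rpow_neg_two_mul_eq {t : ℝ} (ht : 0 ≤ t) (e : ℝ) :
    (1 + t) ^ (-(2 * e)) = ((1 + t) ^ 2) ^ (-e) := by
  rw [← Real.rpow_natCast, ← Real.rpow_mul (by positivity)]; ring_nf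

theorem one_add_rpow_neg_two_mul_le {t e : ℝ} (ht : 0 ≤ t) (he : 0 ≤ e) :
    (1 + t) ^ (-(2 * e)) ≤ (1 + t ^ 2) ^ (-e) := by
  rw [one_add_rpow_neg_two_mul_eq ht]
  exact Real.rpow_le_rpow_of_nonpos (by positivity) (by nlinarith) (by linarith)

theorem one_add_sq_rpow_neg_le {t e : ℝ} (ht : 0 ≤ t) (he : 0 ≤ e) :
    (1 + t ^ 2) ^ (-e) ≤ 2 ^ e * (1 + t) ^ (-(2 * e)) := by
  calc (1 + t ^ 2) ^ (-e) ≤ ((1 + t) ^ 2 / 2) ^ (-e) :=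
        Real.rpow_le_rpow_of_nonpos (by positivity) (by nlinarith [sq_nonneg (1 - t)])
          (by linarith)
    _ = 2 ^ e * (1 + t) ^ (-(2 * e)) := by
        rw [one_add_rpow_neg_two_mul_eq ht, Real.div_rpow (by positivity) (by norm_num),
          Real.rpow_neg (by norm_num : (0:ℝ) ≤ 2), div_inv_eq_mul, mul_comm]

theorem rpow_add_half_mul_rpow_mul_eq {p a b w : ℝ} (ha : 0 ≤ a) (hb : 0 ≤ b) (hw : 0 < w) :
    (a * w) ^ (p - 1) + 1 / 2 * (a * w) ^ (p / 2 - 1) * (b * w) ^ (p / 2) =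
      (a ^ (p - 1) + 1 / 2 * a ^ (p / 2 - 1) * b ^ (p / 2)) * w ^ (p - 1) := by
  have hw_pow : w ^ (p / 2 - 1) * w ^ (p / 2) = w ^ (p - 1) := by
    rw [← Real.rpow_add hw]; ring_nf
  rw [Real.mul_rpow ha hw.le, Real.mul_rpow ha hw.le, Real.mul_rpow hb hw.le, ← hw_pow]
  ring

theorem integral_le_of_lintegral_ofReal_le {α : Type*} [MeasurableSpace α] {μ : Measure α}
    {f : α → ℝ} (hf : 0 ≤ᵐ[μ] f) {b : ℝ} (hb : 0 ≤ b)
    (h : ∫⁻ a, ENNReal.ofReal (f a) ∂μ ≤ ENNReal.ofReal b) : ∫ a, f a ∂μ ≤ b := by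
  by_cases hi : Integrable f μ
  · rwa [← ENNReal.ofReal_le_ofReal_iff hb, ofReal_integral_eq_lintegral_ofReal hi hf]
  · rwa [integral_undef hi]

theorem ofReal_tsum_le_tsum_ofReal {ι : Type*} {g : ι → ℝ} (hg : ∀ j, 0 ≤ g j) :
    ENNReal.ofReal (∑' j, g j) ≤ ∑' j, ENNReal.ofReal (g j) := by
  by_cases hs : Summable g
  · rw [ENNReal.ofReal_tsum_of_nonneg hg hs]
  · simp [tsum_eq_zero_of_not_summable hs]

namespace PeriodicCriticalSystem

theorem prod_one_add_abs_le_of_mem_Qlat {N k : ℕ} {w : Euc N} (hw : w ∈ Qlat N k) :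
    ∏ i, (1 + |w i|) ≤ (1 + ‖w‖) ^ k := by
  set S := Finset.univ.filter fun i : Fin N => (i : ℕ) < k
  calc ∏ i, (1 + |w i|) = ∏ i ∈ S, (1 + |w i|) :=
        (Finset.prod_subset (Finset.subset_univ S) fun i _ hi => by
          rw [hw.2 i (not_lt.1 (by simpa [S] using hi)), abs_zero, add_zero]).symm
    _ ≤ ∏ _i ∈ S, (1 + ‖w‖) :=
        Finset.prod_le_prod (fun i _ => by positivity) fun i _ => by
          gcongr; exact (Real.norm_eq_abs (w i)).symm.trans_le (PiLp.norm_apply_le w i)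
    _ ≤ (1 + ‖w‖) ^ k := by
        rw [Finset.prod_const]
        exact pow_le_pow_right₀ (by linarith [norm_nonneg w])
          (Fin.card_filter_val_lt.trans_le (min_le_right _ _))

theorem LatticeEnum.summable_one_add_norm_rpow_neg {N k : ℕ} {P : ℕ → Euc N}
    (hP : LatticeEnum N k P) (hk : 1 ≤ k) {r : ℝ} (hkr : (k : ℝ) < r) :
    Summable fun j => (1 + ‖P j‖) ^ (-r) := by
  have hmem : ∀ j, P j ∈ Qlat N k := fun j => hP.2.1 ▸ Set.mem_range_self j
  have hk0 : (0 : ℝ) < k := by exact_mod_cast hk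
  set q := r / k
  have hq : 1 < q := (one_lt_div hk0).2 hkr
  -- Coordinates of lattice points are integers, so flooring them is injective.
  set ι : ℕ → Fin N → ℤ := fun j i => ⌊P j i⌋
  have hι : ∀ j i, (ι j i : ℝ) = P j i := fun j i => by
    obtain ⟨m, hm⟩ := (hmem j).1 i
    simp [ι, hm]
  have hinj : Function.Injective ι := fun j j' h => hP.1 <| by
    ext i; rw [← hι, ← hι, h]
  refine ((summable_fin_pi_prod (fun _ => by positivity) (summable_one_add_abs_int_rpow_neg hq)
    N).comp_injective hinj).of_nonneg_of_le (fun j => by positivity) fun j => ?_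
  calc (1 + ‖P j‖) ^ (-r) = ((1 + ‖P j‖) ^ k) ^ (-q) := by
        rw [← Real.rpow_natCast, ← Real.rpow_mul (by positivity), mul_neg,
          show (k : ℝ) * q = r by simp only [q]; field_simp]
    _ ≤ (∏ i, (1 + |P j i|)) ^ (-q) :=
        Real.rpow_le_rpow_of_nonpos (Finset.prod_pos fun i _ => by positivity)
          (prod_one_add_abs_le_of_mem_Qlat (hmem j)) (by linarith)
    _ = ∏ i, (1 + |(ι j i : ℝ)|) ^ (-q) := by
        rw [← Real.finsetProd_rpow _ _ fun i _ => by positivity]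
        simp only [hι]

theorem tS_sub_one_mul {N : ℕ} (hN : 2 < N) :
    (tS N - 1) * (((N : ℝ) - 2) / 2) = ((N : ℝ) + 2) / 2 := by
  have h2 : (2 : ℝ) < N := by exact_mod_cast hN
  have : (N : ℝ) - 2 ≠ 0 := by linarith
  unfold tS; field_simp; ring

def bubbleCoeff (N : ℕ) : ℝ := ((N : ℝ) * ((N : ℝ) - 2)) ^ (((N : ℝ) - 2) / 4)

theorem bubbleCoeff_pos {N : ℕ} (hN : 2 < N) : 0 < bubbleCoeff N := by
  have : (2 : ℝ) < N := by exact_mod_cast hN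
  unfold bubbleCoeff; apply Real.rpow_pos_of_pos; nlinarith

theorem Wb_eq (N : ℕ) (x : Euc N) (μ : ℝ) (y : Euc N) :
    Wb N x μ y = bubbleCoeff N * μ ^ (((N : ℝ) - 2) / 2) *
      (1 + (μ * ‖y - x‖) ^ 2) ^ (-(((N : ℝ) - 2) / 2)) := by
  rw [Wb, Real.rpow_neg (by positivity), mul_pow, div_eq_mul_inv, bubbleCoeff]

theorem Wb_pos {N : ℕ} (hN : 2 < N) (x : Euc N) {μ : ℝ} (hμ : 0 < μ) (y : Euc N) :
    0 < Wb N x μ y := by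
  rw [Wb_eq]; have := bubbleCoeff_pos hN; positivity

theorem Wb_rpow_eq {N : ℕ} (hN : 2 < N) (x : Euc N) {μ : ℝ} (hμ : 0 ≤ μ) (y : Euc N) (q : ℝ) :
    Wb N x μ y ^ q = bubbleCoeff N ^ q * μ ^ (q * (((N : ℝ) - 2) / 2)) *
      (1 + (μ * ‖y - x‖) ^ 2) ^ (-(q * (((N : ℝ) - 2) / 2))) := by
  have := bubbleCoeff_pos hN
  rw [Wb_eq, Real.mul_rpow (by positivity) (by positivity),
    Real.mul_rpow (by positivity) (by positivity), ← Real.rpow_mul hμ,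
    ← Real.rpow_mul (by positivity)]
  ring_nf

theorem Wb_rpow_le {N : ℕ} (hN : 2 < N) (x : Euc N) {μ : ℝ} (hμ : 0 ≤ μ) (y : Euc N) {q : ℝ}
    (hq : 0 ≤ q) : Wb N x μ y ^ q ≤ bubbleCoeff N ^ q * 2 ^ (q * (((N : ℝ) - 2) / 2)) *
      μ ^ (q * (((N : ℝ) - 2) / 2)) * (1 + μ * ‖y - x‖) ^ (-(2 * (q * (((N : ℝ) - 2) / 2)))) := by
  have h2 : (2 : ℝ) < N := by exact_mod_cast hN
  have := bubbleCoeff_pos hN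
  rw [Wb_rpow_eq hN x hμ y q, mul_assoc _ (2 ^ _), mul_comm (2 ^ _) (μ ^ _), ← mul_assoc,
    mul_assoc _ (2 ^ _)]
  exact mul_le_mul_of_nonneg_left (one_add_sq_rpow_neg_le (by positivity) (by positivity))
    (by positivity)

theorem le_Wb_rpow {N : ℕ} (hN : 2 < N) (x : Euc N) {μ : ℝ} (hμ : 0 ≤ μ) (y : Euc N) {q : ℝ}
    (hq : 0 ≤ q) : bubbleCoeff N ^ q * μ ^ (q * (((N : ℝ) - 2) / 2)) *
      (1 + μ * ‖y - x‖) ^ (-(2 * (q * (((N : ℝ) - 2) / 2)))) ≤ Wb N x μ y ^ q := by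
  have h2 : (2 : ℝ) < N := by exact_mod_cast hN
  have := bubbleCoeff_pos hN
  rw [Wb_rpow_eq hN x hμ y q]
  gcongr
  exact one_add_rpow_neg_two_mul_le (by positivity) (by positivity)

theorem Wb_le {N : ℕ} (hN : 2 < N) (x : Euc N) {μ : ℝ} (hμ : 0 ≤ μ) (y : Euc N) :
    Wb N x μ y ≤ bubbleCoeff N * 2 ^ (((N : ℝ) - 2) / 2) * μ ^ (((N : ℝ) - 2) / 2) *
      (1 + μ * ‖y - x‖) ^ (-((N : ℝ) - 2)) := by
  simpa [show 2 * (((N : ℝ) - 2) / 2) = N - 2 by ring] using Wb_rpow_le hN x hμ y zero_le_one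

theorem le_Wb {N : ℕ} (hN : 2 < N) (x : Euc N) {μ : ℝ} (hμ : 0 ≤ μ) (y : Euc N) :
    bubbleCoeff N * μ ^ (((N : ℝ) - 2) / 2) * (1 + μ * ‖y - x‖) ^ (-((N : ℝ) - 2)) ≤
      Wb N x μ y := by
  simpa [show 2 * (((N : ℝ) - 2) / 2) = N - 2 by ring] using le_Wb_rpow hN x hμ y zero_le_one

theorem Wb_rpow_tS_sub_one_le {N : ℕ} (hN : 2 < N) (x : Euc N) {μ : ℝ} (hμ : 0 ≤ μ)
    (y : Euc N) : Wb N x μ y ^ (tS N - 1) ≤ bubbleCoeff N ^ (tS N - 1) *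
      2 ^ (((N : ℝ) + 2) / 2) * μ ^ (((N : ℝ) + 2) / 2) * (1 + μ * ‖y - x‖) ^ (-((N : ℝ) + 2)) := by
  have h2 : (2 : ℝ) < N := by exact_mod_cast hN
  have hp : 0 ≤ tS N - 1 := by
    unfold tS; rw [sub_nonneg, le_div_iff₀ (by linarith)]; linarith
  simpa [tS_sub_one_mul hN, show 2 * (((N : ℝ) + 2) / 2) = N + 2 by ring] using
    Wb_rpow_le hN x hμ y hp

theorem sphereArea_pos {N : ℕ} (hN : 0 < N) : 0 < sphereArea N := by
  have : NeZero N := ⟨hN.ne'⟩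
  exact mul_pos (by exact_mod_cast hN)
    (ENNReal.toReal_pos (measure_ball_pos volume 0 one_pos).ne' measure_ball_lt_top.ne)

theorem Γfun_eq (N : ℕ) (a z : Euc N) :
    Γfun N a z = (((N : ℝ) - 2) * sphereArea N)⁻¹ * ‖a - z‖ ^ (-((N : ℝ) - 2)) := by
  rw [Γfun, one_div, mul_inv, Real.rpow_neg (norm_nonneg _)]

theorem Γfun_nonneg {N : ℕ} (hN : 2 < N) (a z : Euc N) : 0 ≤ Γfun N a z := by
  have : (2 : ℝ) < N := by exact_mod_cast hN
  have := sphereArea_pos (N := N) (by omega)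
  rw [Γfun_eq]
  exact mul_nonneg (inv_nonneg.2 (by positivity)) (by positivity)

theorem Green_nonneg {N : ℕ} (hN : 2 < N) (L : ℝ) (P : ℕ → Euc N) (y z : Euc N) :
    0 ≤ Green N L P y z :=
  tsum_nonneg fun _ => Γfun_nonneg hN _ _

theorem exists_lintegral_Γfun_mul_Wb_rpow_le {N : ℕ} (hN : 2 < N) :
    ∃ C : ℝ, 0 < C ∧ ∀ (a x : Euc N) {μ : ℝ}, 0 < μ →
      ∫⁻ z, ENNReal.ofReal (Γfun N a z * Wb N x μ z ^ (tS N - 1)) ≤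
        ENNReal.ofReal (C * Wb N x μ a) := by
  have : NeZero N := ⟨by omega⟩
  have h2 : (2 : ℝ) < N := by exact_mod_cast hN
  obtain ⟨C, hC, hRiesz⟩ := exists_lintegral_norm_sub_rpow_mul_one_add_mul_norm_rpow_le
    (volume : Measure (Euc N)) (α := (N : ℝ) - 2) (β := (N : ℝ) + 2) (by linarith)
    (by rw [finrank_euclideanSpace_fin]; linarith) (by rw [finrank_euclideanSpace_fin]; linarith)
  rw [finrank_euclideanSpace_fin] at hRiesz
  set cΓ := (((N : ℝ) - 2) * sphereArea N)⁻¹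
  have hcΓ : 0 < cΓ := inv_pos.2 (mul_pos (by linarith) (sphereArea_pos (by omega)))
  set B := bubbleCoeff N
  have hB : 0 < B := bubbleCoeff_pos hN
  set K := cΓ * B ^ (tS N - 1) * 2 ^ (((N : ℝ) + 2) / 2)
  refine ⟨K * C / B, by positivity, fun a x μ hμ => ?_⟩
  have hpt : ∀ z, ENNReal.ofReal (Γfun N a z * Wb N x μ z ^ (tS N - 1)) ≤
      ENNReal.ofReal (K * μ ^ (((N : ℝ) + 2) / 2)) *
        ENNReal.ofReal (‖a - z‖ ^ (-((N : ℝ) - 2)) * (1 + μ * ‖z - x‖) ^ (-((N : ℝ) + 2))) := by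
    intro z
    rw [← ENNReal.ofReal_mul (by positivity), Γfun_eq]
    refine ENNReal.ofReal_le_ofReal ((mul_le_mul_of_nonneg_left
      (Wb_rpow_tS_sub_one_le hN x hμ.le z) (by positivity)).trans_eq ?_)
    ring
  calc ∫⁻ z, ENNReal.ofReal (Γfun N a z * Wb N x μ z ^ (tS N - 1))
      ≤ ENNReal.ofReal (K * μ ^ (((N : ℝ) + 2) / 2)) * ∫⁻ z,
          ENNReal.ofReal (‖a - z‖ ^ (-((N : ℝ) - 2)) * (1 + μ * ‖z - x‖) ^ (-((N : ℝ) + 2))) := by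
        rw [← lintegral_const_mul' _ _ ofReal_ne_top]; exact lintegral_mono hpt
    _ ≤ ENNReal.ofReal (K * μ ^ (((N : ℝ) + 2) / 2)) *
          ENNReal.ofReal (C * μ ^ ((N : ℝ) - 2 - N) * (1 + μ * ‖a - x‖) ^ (-((N : ℝ) - 2))) := by
        gcongr; exact hRiesz a x hμ
    _ = ENNReal.ofReal (K * C / B *
          (B * μ ^ (((N : ℝ) - 2) / 2) * (1 + μ * ‖a - x‖) ^ (-((N : ℝ) - 2)))) := by
        rw [← ENNReal.ofReal_mul (by positivity)]
        congr 1
        have hμpow : μ ^ (((N : ℝ) + 2) / 2) * μ ^ ((N : ℝ) - 2 - N) = μ ^ (((N : ℝ) - 2) / 2) := by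
          rw [← Real.rpow_add hμ]; ring_nf
        field_simp
        rw [← hμpow]; ring
    _ ≤ ENNReal.ofReal (K * C / B * Wb N x μ a) :=
        ENNReal.ofReal_le_ofReal (mul_le_mul_of_nonneg_left (le_Wb hN x hμ.le a) (by positivity))

theorem Wb_add_smul (N : ℕ) (L : ℝ) (P : ℕ → Euc N) (x : Euc N) (μ : ℝ) (y : Euc N) (j : ℕ) :
    Wb N x μ (y + L • P j) = Wb N (xc L P x j) μ y := by
  rw [Wb, Wb, xc, sub_sub_eq_add_sub]

theorem summable_Wb_xc {N k : ℕ} (hN : 2 < N) (hk : 1 ≤ k) (hkN : (k : ℝ) < (N : ℝ) - 2)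
    {P : ℕ → Euc N} (hP : LatticeEnum N k P) {L : ℝ} (hL : 0 < L) (x : Euc N) {μ : ℝ}
    (hμ : 0 < μ) (y : Euc N) : Summable fun j => Wb N (xc L P x j) μ y := by
  have h2 : (2 : ℝ) < N := by exact_mod_cast hN
  have hs := (hP.summable_one_add_norm_rpow_neg hk hkN).one_add_norm_add_smul_rpow_neg
    (by linarith) (μ • (y - x)) (mul_pos hμ hL)
  refine (hs.mul_left (bubbleCoeff N * 2 ^ (((N : ℝ) - 2) / 2) * μ ^ (((N : ℝ) - 2) / 2)))
    |>.of_nonneg_of_le (fun j => (Wb_pos hN _ hμ y).le) fun j => ?_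
  have hnorm : ‖μ • (y - x) + (μ * L) • P j‖ = μ * ‖y - xc L P x j‖ := by
    rw [xc, sub_sub_eq_add_sub, add_sub_right_comm, mul_smul, ← smul_add, norm_smul,
      Real.norm_of_nonneg hμ.le]
  rw [hnorm]
  exact Wb_le hN (xc L P x j) hμ.le y

theorem exists_integral_Green_mul_Wb_rpow_le {N k : ℕ} (hN : 2 < N) (hk : 1 ≤ k)
    (hkN : (k : ℝ) < (N : ℝ) - 2) {P : ℕ → Euc N} (hP : LatticeEnum N k P) :
    ∃ C : ℝ, 0 < C ∧ ∀ L : ℝ, 0 < L → ∀ (x : Euc N) (μ : ℝ), 0 < μ → ∀ y : Euc N,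
      ∫ z in strip N k L, Green N L P y z * Wb N x μ z ^ (tS N - 1) ≤
        C * ∑' j, Wb N (xc L P x j) μ y := by
  obtain ⟨C, hC, hpot⟩ := exists_lintegral_Γfun_mul_Wb_rpow_le hN
  refine ⟨C, hC, fun L hL x μ hμ y => ?_⟩
  have hnn : ∀ j, 0 ≤ C * Wb N (xc L P x j) μ y := fun j => by
    have := Wb_pos hN (xc L P x j) hμ y; positivity
  have hΓW : ∀ a z, 0 ≤ Γfun N a z * Wb N x μ z ^ (tS N - 1) := fun a z => by
    have := Γfun_nonneg hN a z; have := Wb_pos hN x hμ z; positivity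
  rw [← tsum_mul_left]
  refine integral_le_of_lintegral_ofReal_le (ae_of_all _ fun z => ?_) (tsum_nonneg hnn) ?_
  · have := Green_nonneg hN L P y z; have := Wb_pos hN x hμ z; positivity
  calc ∫⁻ z in strip N k L, ENNReal.ofReal (Green N L P y z * Wb N x μ z ^ (tS N - 1))
      ≤ ∫⁻ z, ENNReal.ofReal (Green N L P y z * Wb N x μ z ^ (tS N - 1)) :=
        setLIntegral_le_lintegral _ _
    _ ≤ ∫⁻ z, ∑' j, ENNReal.ofReal (Γfun N (y + L • P j) z * Wb N x μ z ^ (tS N - 1)) :=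
        lintegral_mono fun z => by
          rw [Green, ← tsum_mul_right]; exact ofReal_tsum_le_tsum_ofReal fun j => hΓW _ z
    _ = ∑' j, ∫⁻ z, ENNReal.ofReal (Γfun N (y + L • P j) z * Wb N x μ z ^ (tS N - 1)) :=
        lintegral_tsum fun j => by unfold Γfun Wb; fun_prop
    _ ≤ ∑' j, ENNReal.ofReal (C * Wb N (xc L P x j) μ y) :=
        ENNReal.tsum_le_tsum fun j => (hpot _ x hμ).trans_eq (by rw [Wb_add_smul])
    _ = ENNReal.ofReal (∑' j, C * Wb N (xc L P x j) μ y) :=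
        (ENNReal.ofReal_tsum_of_nonneg hnn
          ((summable_Wb_xc hN hk hkN hP hL x hμ y).mul_left C)).symm

theorem PU_eq {N : ℕ} (hN : 2 < N) (k : ℕ) (L : ℝ) (P : ℕ → Euc N) {s κ : ℝ} (hs : 0 ≤ s)
    (hκ : 0 ≤ κ) (x : Euc N) {μ : ℝ} (hμ : 0 < μ) (y : Euc N) :
    PU N k L P s κ x μ y = (s ^ (tS N - 1) + 1 / 2 * s ^ (tS N / 2 - 1) * (κ * s) ^ (tS N / 2)) *
      ∫ z in strip N k L, Green N L P y z * Wb N x μ z ^ (tS N - 1) := by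
  rw [PU, ← integral_const_mul]
  congr 1 with z
  rw [Ub, Vb, rpow_add_half_mul_rpow_mul_eq hs (mul_nonneg hκ hs) (Wb_pos hN x hμ z)]
  ring

theorem PV_eq {N : ℕ} (hN : 2 < N) (k : ℕ) (L : ℝ) (P : ℕ → Euc N) {s κ : ℝ} (hs : 0 ≤ s)
    (hκ : 0 ≤ κ) (x : Euc N) {μ : ℝ} (hμ : 0 < μ) (y : Euc N) :
    PV N k L P s κ x μ y =
      ((κ * s) ^ (tS N - 1) + 1 / 2 * (κ * s) ^ (tS N / 2 - 1) * s ^ (tS N / 2)) *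
        ∫ z in strip N k L, Green N L P y z * Wb N x μ z ^ (tS N - 1) := by
  rw [PV, ← integral_const_mul]
  congr 1 with z
  rw [Ub, Vb, rpow_add_half_mul_rpow_mul_eq (mul_nonneg hκ hs) hs (Wb_pos hN x hμ z)]
  ring

/-- Lemma 2.1, pointwise bounds for the projected bubbles. -/
theorem lemma2_1
    (N k : ℕ) (hN : 5 ≤ N) (hk1 : 1 ≤ k) (hk2 : (k : ℝ) < ((N : ℝ) - 2) / 2)
    (s κ : ℝ) (hsκ : SyncConst N s κ)
    (P : ℕ → Euc N) (hP : LatticeEnum N k P) :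
    ∃ C1 C2 : ℝ, 0 < C1 ∧ 0 < C2 ∧
      ∀ (L : ℝ), 0 < L → ∀ (x : Euc N) (μ : ℝ), 0 < μ → ∀ y ∈ strip N k L,
        (0 ≤ PU N k L P s κ x μ y ∧
          PU N k L P s κ x μ y ≤ C1 * ∑' j : ℕ, Ub N s (xc L P x j) μ y) ∧
        (0 ≤ PV N k L P s κ x μ y ∧
          PV N k L P s κ x μ y ≤ C2 * ∑' j : ℕ, Vb N s κ (xc L P x j) μ y) := by
  obtain ⟨hs, hκ, -, -⟩ := hsκ
  have hN2 : 2 < N := by omega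
  have hkN : (k : ℝ) < N - 2 := by
    have : (5 : ℝ) ≤ N := by exact_mod_cast hN
    linarith
  obtain ⟨C, hC, hbound⟩ := exists_integral_Green_mul_Wb_rpow_le hN2 hk1 hkN hP
  set cU := s ^ (tS N - 1) + 1 / 2 * s ^ (tS N / 2 - 1) * (κ * s) ^ (tS N / 2)
  set cV := (κ * s) ^ (tS N - 1) + 1 / 2 * (κ * s) ^ (tS N / 2 - 1) * s ^ (tS N / 2)
  refine ⟨C * cU / s, C * cV / (κ * s), by positivity, by positivity,
    fun L hL x μ hμ y _ => ?_⟩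
  set I := ∫ z in strip N k L, Green N L P y z * Wb N x μ z ^ (tS N - 1)
  have hI0 : 0 ≤ I := integral_nonneg fun z => by
    have := Green_nonneg hN2 L P y z; have := Wb_pos hN2 x hμ z; positivity
  have hU : ∑' j, Ub N s (xc L P x j) μ y = s * ∑' j, Wb N (xc L P x j) μ y := tsum_mul_left
  have hV : ∑' j, Vb N s κ (xc L P x j) μ y = κ * s * ∑' j, Wb N (xc L P x j) μ y :=
    tsum_mul_left
  have hscaled : ∀ {c a : ℝ}, 0 ≤ c → 0 < a →
      c * I ≤ C * c / a * (a * ∑' j, Wb N (xc L P x j) μ y) := by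
    intro c a hc ha
    calc c * I ≤ c * (C * ∑' j, Wb N (xc L P x j) μ y) :=
          mul_le_mul_of_nonneg_left (hbound L hL x μ hμ y) hc
      _ = _ := by field_simp
  rw [PU_eq hN2 k L P hs.le hκ.le x hμ y, PV_eq hN2 k L P hs.le hκ.le x hμ y, hU, hV]
  exact ⟨⟨mul_nonneg (by positivity) hI0, hscaled (by positivity) hs⟩,
    ⟨mul_nonneg (by positivity) hI0, hscaled (by positivity) (mul_pos hκ hs)⟩⟩

end PeriodicCriticalSystem
end
end
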